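/- arXiv:2003.12964 — 8 statements merged into one kernel-verified Lean document; each statement's English description precedes it below -/
import Mathlib

section
/- For every topological space X there exist a completely regular Hausdorff (Tychonoff) space Y and a ring isomorphism Ψ from B_1(Y) onto B_1(X) such that the restriction of Ψ to B_1*(Y) is a ring isomorphism onto B_1*(X). -/
open Filter Topology

/-- The ring of Baire one (pointwise limits of sequences of continuous) real-valued
functions on a topological space, as a subring of `X → ℝ`. -/
def baireOne (X : Type*) [TopologicalSpace X] : Subring (X → ℝ) where
  carrier := {f | ∃ F : ℕ → C(X, ℝ), ∀ x, Tendsto (fun n => F n x) atTop (𝓝 (f x))}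
  zero_mem' := ⟨fun _ => 0, fun x => by simpa using tendsto_const_nhds⟩
  one_mem' := ⟨fun _ => 1, fun x => by simpa using tendsto_const_nhds⟩
  add_mem' := by
    rintro f g ⟨F, hF⟩ ⟨G, hG⟩
    exact ⟨fun n => F n + G n, fun x => by simpa using (hF x).add (hG x)⟩
  mul_mem' := by
    rintro f g ⟨F, hF⟩ ⟨G, hG⟩
    exact ⟨fun n => F n * G n, fun x => by simpa using (hF x).mul (hG x)⟩
  neg_mem' := by
    rintro f ⟨F, hF⟩
    exact ⟨fun n => -F n, fun x => by simpa using (hF x).neg⟩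
/-- The subring of bounded Baire one real-valued functions. -/
def baireOneStar (X : Type*) [TopologicalSpace X] : Subring (X → ℝ) where
  carrier := {f | f ∈ baireOne X ∧ ∃ C : ℝ, ∀ x, |f x| ≤ C}
  zero_mem' := ⟨(baireOne X).zero_mem, 0, by simp⟩
  one_mem' := ⟨(baireOne X).one_mem, 1, by simp⟩
  add_mem' := by
    rintro f g ⟨hf, C, hC⟩ ⟨hg, D, hD⟩
    exact ⟨(baireOne X).add_mem hf hg, C + D, fun x =>
      (abs_add_le _ _).trans (add_le_add (hC x) (hD x))⟩
  mul_mem' := by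
    rintro f g ⟨hf, C, hC⟩ ⟨hg, D, hD⟩
    refine ⟨(baireOne X).mul_mem hf hg, C * D, fun x => ?_⟩
    rw [Pi.mul_apply, abs_mul]
    exact mul_le_mul (hC x) (hD x) (abs_nonneg _) ((abs_nonneg _).trans (hC x))
  neg_mem' := by
    rintro f ⟨hf, C, hC⟩
    exact ⟨(baireOne X).neg_mem hf, C, fun x => by simpa using hC x⟩

/-!
The evaluation map `e : X → ℝ^{C(X, ℝ)}`, `e x f = f x`, is continuous onto its image `Y`,
which is Tychonoff as a subspace of a power of `ℝ`. Composing with `e` maps `B₁(Y)` into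
`B₁(X)`, injectively since `e` is onto `Y`. It is also onto: every continuous `f` on `X`
factors through `Y` as the coordinate at `f`, so a Baire one function on `X`, being a pointwise
limit of such `fₙ`, is constant on the fibres of `e` and is the composite of `e` with the
pointwise limit of the coordinates at `fₙ`. Surjectivity of `e` also means that composing
with it preserves and reflects boundedness.
-/

namespace baireOne

variable {X Y : Type*} [TopologicalSpace X] [TopologicalSpace Y]

lemma comp_mem {g : Y → ℝ} (hg : g ∈ baireOne Y) (φ : C(X, Y)) : g ∘ φ ∈ baireOne X := by
  obtain ⟨G, hG⟩ := hg
  exact ⟨fun n => (G n).comp φ, fun x => hG (φ x)⟩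

def comap (φ : C(X, Y)) : baireOne Y →+* baireOne X where
  toFun g := ⟨g ∘ φ, comp_mem g.2 φ⟩
  map_one' := rfl
  map_mul' _ _ := rfl
  map_zero' := rfl
  map_add' _ _ := rfl

lemma comap_injective {φ : C(X, Y)} (hφ : Function.Surjective φ) :
    Function.Injective (comap φ) := fun _ _ h =>
  Subtype.ext <| hφ.injective_comp_right <| congrArg Subtype.val h

lemma comap_mem_baireOneStar_iff {φ : C(X, Y)} (hφ : Function.Surjective φ) (g : baireOne Y) :
    (comap φ g : X → ℝ) ∈ baireOneStar X ↔ (g : Y → ℝ) ∈ baireOneStar Y :=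
  and_congr (iff_of_true (comap φ g).2 g.2) (exists_congr fun C =>
    (hφ.forall (p := fun y => |(g : Y → ℝ) y| ≤ C)).symm)

end baireOne

def evalMap (X : Type*) [TopologicalSpace X] : X → C(X, ℝ) → ℝ := fun x f => f x

lemma continuous_evalMap (X : Type*) [TopologicalSpace X] : Continuous (evalMap X) :=
  continuous_pi fun f => f.continuous

section TychonoffImage

variable {X : Type*} [TopologicalSpace X]

def toRangeEvalMap : C(X, Set.range (evalMap X)) :=
  ⟨Set.rangeFactorization (evalMap X), (continuous_evalMap X).rangeFactorization⟩

lemma toRangeEvalMap_surjective : Function.Surjective (toRangeEvalMap (X := X)) :=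
  Set.rangeFactorization_surjective

lemma baireOne_apply_eq_of_evalMap_eq {f : X → ℝ} (hf : f ∈ baireOne X) {x x' : X}
    (h : evalMap X x = evalMap X x') : f x = f x' := by
  obtain ⟨F, hF⟩ := hf
  have hFx : ∀ n, F n x = F n x' := fun n => congrFun h (F n)
  exact tendsto_nhds_unique (hF x) (by simpa only [hFx] using hF x')

lemma comp_rangeSplitting_evalMap_mem_baireOne {f : X → ℝ} (hf : f ∈ baireOne X) :
    f ∘ Set.rangeSplitting (evalMap X) ∈ baireOne (Set.range (evalMap X)) := by
  obtain ⟨F, hF⟩ := hf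
  have hcoord : ∀ n y, F n (Set.rangeSplitting (evalMap X) y) = (y : C(X, ℝ) → ℝ) (F n) :=
    fun n y => congrFun (Set.apply_rangeSplitting (evalMap X) y) (F n)
  refine ⟨fun n => ⟨fun y => (y : C(X, ℝ) → ℝ) (F n),
    (continuous_apply (F n)).comp continuous_subtype_val⟩, fun y => ?_⟩
  simpa only [ContinuousMap.coe_mk, Function.comp_apply, ← hcoord] using hF _

lemma baireOne_comap_toRangeEvalMap_surjective :
    Function.Surjective (baireOne.comap (toRangeEvalMap (X := X))) := by
  intro f
  refine ⟨⟨_, comp_rangeSplitting_evalMap_mem_baireOne f.2⟩, Subtype.ext <| funext fun x => ?_⟩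
  exact baireOne_apply_eq_of_evalMap_eq f.2 (Set.apply_rangeSplitting (evalMap X) _)

end TychonoffImage

/-- M. H. Stone's theorem for `B₁`: for every topological space `X` there is a Tychonoff
(completely regular Hausdorff) space `Y` and a ring isomorphism `Ψ : B₁(Y) ≃+* B₁(X)`
whose restriction to the bounded Baire one functions is a ring isomorphism of
`B₁*(Y)` onto `B₁*(X)`. -/
theorem stone_theorem_for_baireOne (X : Type u) [TopologicalSpace X] :
    ∃ (Y : Type u) (tY : TopologicalSpace Y),
      @CompletelyRegularSpace Y tY ∧ @T2Space Y tY ∧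
      ∃ Ψ : ↥(@baireOne Y tY) ≃+* ↥(baireOne X),
        ∀ f : ↥(@baireOne Y tY),
          ((f : Y → ℝ) ∈ @baireOneStar Y tY ↔ ((Ψ f : X → ℝ) ∈ baireOneStar X)) :=
  ⟨Set.range (evalMap X), inferInstance, inferInstance, inferInstance,
    RingEquiv.ofBijective _ ⟨baireOne.comap_injective toRangeEvalMap_surjective,
      baireOne_comap_toRangeEvalMap_surjective⟩,
    fun g => (baireOne.comap_mem_baireOneStar_iff toRangeEvalMap_surjective g).symm⟩
end

section
/- Let X be a Tychonoff space. The map sending a maximal ideal M of B_1(X) to Z[M] = {Z(f) : f ∈ M} is a homeomorphism from the structure space M(B_1(X)) (with the hull-kernel topology) onto the set of all Z_B-ultrafilters on X equipped with the Stone topology. -/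
open Filter Topology

/-- The structure space of a commutative ring: the set of its maximal ideals. -/
def StructSpace (R : Type*) [CommRing R] : Type _ := {I : Ideal R // I.IsMaximal}

/-- The hull-kernel topology on the structure space, whose closed sets are generated by
the base `{M | f ∈ M}`, `f ∈ R`. -/
instance (R : Type*) [CommRing R] : TopologicalSpace (StructSpace R) :=
  TopologicalSpace.generateFrom {U : Set (StructSpace R) | ∃ f : R, U = {M | f ∉ M.1}}
/-- The zero sets of Baire one functions. -/
def zSets (X : Type*) [TopologicalSpace X] : Set (Set X) :=
  {Z | ∃ f ∈ baireOne X, Z = {x | f x = 0}}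

/-- A `Z_B`-filter on `X`. -/
def IsZBFilter {X : Type*} [TopologicalSpace X] (F : Set (Set X)) : Prop :=
  F.Nonempty ∧ F ⊆ zSets X ∧ ∅ ∉ F ∧ (∀ Z₁ ∈ F, ∀ Z₂ ∈ F, Z₁ ∩ Z₂ ∈ F) ∧
    ∀ Z ∈ F, ∀ Z' ∈ zSets X, Z ⊆ Z' → Z' ∈ F

/-- A `Z_B`-ultrafilter on `X`: a maximal `Z_B`-filter. -/
def IsZBUltrafilter {X : Type*} [TopologicalSpace X] (F : Set (Set X)) : Prop :=
  IsZBFilter F ∧ ∀ G : Set (Set X), IsZBFilter G → F ⊆ G → F = G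

/-- The set of `Z_B`-ultrafilters on `X`. -/
def ZBUltra (X : Type*) [TopologicalSpace X] : Type _ := {F : Set (Set X) // IsZBUltrafilter F}

/-- The Stone topology on the set of `Z_B`-ultrafilters, whose closed sets are generated
by the base `Z̄ = {U | Z ∈ U}`, `Z ∈ Z(B₁(X))`. -/
instance (X : Type*) [TopologicalSpace X] : TopologicalSpace (ZBUltra X) :=
  TopologicalSpace.generateFrom
    {V : Set (ZBUltra X) | ∃ Z ∈ zSets X, V = {U | Z ∉ U.1}}


/-!
The inverse of a nowhere vanishing Baire one function `f` is again Baire one: if `Fₙ → f`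
pointwise with `Fₙ` continuous, then `Fₙ / (Fₙ² + 1/(n+1)) → 1/f`. Hence an ideal of
`B₁(X)` containing an element without zeros is the whole ring, so `Z[I]` is a
`Z_B`-filter for every proper ideal `I` (using `Z(fg) = Z(f) ∪ Z(g)` and
`Z(f² + g²) = Z(f) ∩ Z(g)`), and conversely `Z⁻¹[F] = {f | Z(f) ∈ F}` is a proper ideal
for every `Z_B`-filter `F`. These two monotone maps restrict to mutually inverse
bijections between maximal ideals and `Z_B`-ultrafilters, and since `f ∈ M ↔ Z(f) ∈ Z[M]`
for maximal `M`, they exchange the basic closed sets `M̂_f` and `Z̄(f)`.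
-/

namespace BaireOne

variable {X : Type*} [TopologicalSpace X]

theorem inv_mem {f : X → ℝ} (hf : f ∈ baireOne X) (hf₀ : ∀ x, f x ≠ 0) :
    f⁻¹ ∈ baireOne X := by
  obtain ⟨F, hF⟩ := hf
  refine ⟨fun n => ⟨fun x => F n x / (F n x ^ 2 + 1 / (n + 1)), ?_⟩, fun x => ?_⟩
  · exact (F n).continuous.div (((F n).continuous.pow 2).add continuous_const)
      fun x => by positivity
  · have hden :
        Tendsto (fun n : ℕ => F n x ^ 2 + 1 / ((n : ℝ) + 1)) atTop (𝓝 (f x ^ 2)) := by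
      simpa using ((hF x).pow 2).add tendsto_one_div_add_atTop_nhds_zero_nat
    have hquot : f x / f x ^ 2 = f⁻¹ x := by
      rw [Pi.inv_apply, sq, div_mul_eq_div_div, div_self (hf₀ x), one_div]
    exact hquot ▸ (hF x).div hden (pow_ne_zero 2 (hf₀ x))

theorem isUnit_of_forall_ne_zero (f : baireOne X) (hf : ∀ x, (f : X → ℝ) x ≠ 0) :
    IsUnit f :=
  IsUnit.of_mul_eq_one (b := ⟨_, inv_mem f.2 hf⟩) <|
    Subtype.ext <| funext fun x => mul_inv_cancel₀ (hf x)

def zeroSet (f : baireOne X) : Set X := {x | (f : X → ℝ) x = 0}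

theorem zeroSet_mem_zSets (f : baireOne X) : zeroSet f ∈ zSets X := ⟨f, f.2, rfl⟩

theorem exists_zeroSet_eq {Z : Set X} (hZ : Z ∈ zSets X) : ∃ f : baireOne X, zeroSet f = Z := by
  obtain ⟨f, hf, rfl⟩ := hZ
  exact ⟨⟨f, hf⟩, rfl⟩

@[simp]
theorem zeroSet_zero : zeroSet (0 : baireOne X) = Set.univ := by
  ext; simp [zeroSet]

@[simp]
theorem zeroSet_one : zeroSet (1 : baireOne X) = ∅ := by
  ext; simp [zeroSet]

theorem zeroSet_mul (f g : baireOne X) : zeroSet (f * g) = zeroSet f ∪ zeroSet g := by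
  ext; simp [zeroSet]

theorem zeroSet_mul_self_add_mul_self (f g : baireOne X) :
    zeroSet (f * f + g * g) = zeroSet f ∩ zeroSet g := by
  ext x
  simp [zeroSet, mul_self_add_mul_self_eq_zero]

theorem zeroSet_inter_subset_zeroSet_add (f g : baireOne X) :
    zeroSet f ∩ zeroSet g ⊆ zeroSet (f + g) := by
  rintro x ⟨hf, hg⟩
  simp_all [zeroSet]

theorem isUnit_of_zeroSet_eq_empty {f : baireOne X} (hf : zeroSet f = ∅) : IsUnit f :=
  isUnit_of_forall_ne_zero f fun x hx => (hf.subset hx : x ∈ (∅ : Set X))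

/-- `Z[I]`. -/
def zImage (I : Ideal (baireOne X)) : Set (Set X) := {Z | ∃ f ∈ I, Z = zeroSet f}

theorem isZBFilter_zImage {I : Ideal (baireOne X)} (hI : I ≠ ⊤) : IsZBFilter (zImage I) := by
  refine ⟨⟨_, 0, I.zero_mem, rfl⟩, ?_, ?_, ?_, ?_⟩
  · rintro Z ⟨f, -, rfl⟩
    exact zeroSet_mem_zSets f
  · rintro ⟨f, hfI, hf⟩
    exact hI (I.eq_top_of_isUnit_mem hfI (isUnit_of_zeroSet_eq_empty hf.symm))
  · rintro _ ⟨f, hf, rfl⟩ _ ⟨g, hg, rfl⟩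
    exact ⟨f * f + g * g, I.add_mem (I.mul_mem_left f hf) (I.mul_mem_left g hg),
      (zeroSet_mul_self_add_mul_self f g).symm⟩
  · rintro _ ⟨f, hf, rfl⟩ Z' hZ' hsub
    obtain ⟨g, rfl⟩ := exists_zeroSet_eq hZ'
    exact ⟨f * g, I.mul_mem_right g hf, by rw [zeroSet_mul, Set.union_eq_right.mpr hsub]⟩

end BaireOne

open BaireOne

namespace IsZBFilter

variable {X : Type*} [TopologicalSpace X] {F : Set (Set X)}

theorem univ_mem (hF : IsZBFilter F) : Set.univ ∈ F := by
  obtain ⟨Z, hZ⟩ := hF.1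
  exact hF.2.2.2.2 Z hZ _ (zeroSet_zero (X := X) ▸ zeroSet_mem_zSets 0) (Set.subset_univ Z)

/-- `Z⁻¹[F]`. -/
def ideal (hF : IsZBFilter F) : Ideal (baireOne X) where
  carrier := {f | zeroSet f ∈ F}
  zero_mem' := by simpa using hF.univ_mem
  add_mem' {f g} hf hg :=
    hF.2.2.2.2 _ (hF.2.2.2.1 _ hf _ hg) _ (zeroSet_mem_zSets _)
      (zeroSet_inter_subset_zeroSet_add f g)
  smul_mem' c f hf := by
    refine hF.2.2.2.2 _ hf _ (zeroSet_mem_zSets _) ?_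
    rw [smul_eq_mul, zeroSet_mul]
    exact Set.subset_union_right

theorem mem_ideal (hF : IsZBFilter F) {f : baireOne X} : f ∈ hF.ideal ↔ zeroSet f ∈ F :=
  Iff.rfl

theorem ideal_ne_top (hF : IsZBFilter F) : hF.ideal ≠ ⊤ := fun h =>
  hF.2.2.1 (by simpa using (hF.mem_ideal (f := 1)).1 (h ▸ Submodule.mem_top))

theorem zImage_subset_iff_le_ideal (hF : IsZBFilter F) {I : Ideal (baireOne X)} :
    zImage I ⊆ F ↔ I ≤ hF.ideal :=
  ⟨fun h f hf => h ⟨f, hf, rfl⟩, by rintro h _ ⟨f, hf, rfl⟩; exact h hf⟩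

end IsZBFilter

namespace BaireOne

variable {X : Type*} [TopologicalSpace X] {M : Ideal (baireOne X)} {U : Set (Set X)}

theorem ideal_zImage (hM : M.IsMaximal) : (isZBFilter_zImage hM.ne_top).ideal = M :=
  (hM.eq_of_le (IsZBFilter.ideal_ne_top _)
    ((IsZBFilter.zImage_subset_iff_le_ideal _).1 subset_rfl)).symm

theorem zeroSet_mem_zImage_iff (hM : M.IsMaximal) {f : baireOne X} :
    zeroSet f ∈ zImage M ↔ f ∈ M :=
  ⟨fun h => ideal_zImage hM ▸ h, fun h => ⟨f, h, rfl⟩⟩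

theorem isZBUltrafilter_zImage (hM : M.IsMaximal) : IsZBUltrafilter (zImage M) := by
  refine ⟨isZBFilter_zImage hM.ne_top, fun G hG hMG => hMG.antisymm fun Z hZ => ?_⟩
  obtain ⟨f, rfl⟩ := exists_zeroSet_eq (hG.2.1 hZ)
  have hM_eq : M = hG.ideal :=
    hM.eq_of_le hG.ideal_ne_top ((hG.zImage_subset_iff_le_ideal).1 hMG)
  exact ⟨f, hM_eq ▸ hZ, rfl⟩

theorem zImage_ideal (hU : IsZBUltrafilter U) : zImage hU.1.ideal = U := by
  refine (hU.2 _ (isZBFilter_zImage hU.1.ideal_ne_top) fun Z hZ => ?_).symm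
  obtain ⟨f, rfl⟩ := exists_zeroSet_eq (hU.1.2.1 hZ)
  exact ⟨f, hZ, rfl⟩

theorem isMaximal_ideal (hU : IsZBUltrafilter U) : hU.1.ideal.IsMaximal := by
  refine ⟨⟨hU.1.ideal_ne_top, fun J hJ => ?_⟩⟩
  by_contra hJ_top
  have hUJ : U = zImage J := hU.2 _ (isZBFilter_zImage hJ_top) <| by
    rw [← zImage_ideal hU]
    rintro _ ⟨f, hf, rfl⟩
    exact ⟨f, hJ.le hf, rfl⟩
  obtain ⟨f, hfJ, hfU⟩ := SetLike.exists_of_lt hJ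
  exact hfU (show zeroSet f ∈ U from hUJ ▸ ⟨f, hfJ, rfl⟩)

def zImageEquiv : StructSpace (baireOne X) ≃ ZBUltra X where
  toFun M := ⟨zImage M.1, isZBUltrafilter_zImage M.2⟩
  invFun U := ⟨U.2.1.ideal, isMaximal_ideal U.2⟩
  left_inv M := Subtype.ext (ideal_zImage M.2)
  right_inv U := Subtype.ext (zImage_ideal U.2)

theorem continuous_zImageEquiv : Continuous (zImageEquiv (X := X)) := by
  refine continuous_generateFrom_iff.2 ?_
  rintro _ ⟨Z, hZ, rfl⟩
  obtain ⟨f, rfl⟩ := exists_zeroSet_eq hZ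
  have hpre : zImageEquiv ⁻¹' {U : ZBUltra X | zeroSet f ∉ U.1} = {M | f ∉ M.1} :=
    Set.ext fun M => not_congr (zeroSet_mem_zImage_iff M.2)
  rw [hpre]
  exact TopologicalSpace.GenerateOpen.basic _ ⟨f, rfl⟩

theorem continuous_zImageEquiv_symm : Continuous (zImageEquiv (X := X)).symm :=
  continuous_generateFrom_iff.2 fun _ ⟨f, hf⟩ =>
    hf ▸ TopologicalSpace.GenerateOpen.basic _ ⟨zeroSet f, zeroSet_mem_zSets f, rfl⟩

def zImageHomeomorph : StructSpace (baireOne X) ≃ₜ ZBUltra X where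
  toEquiv := zImageEquiv
  continuous_toFun := continuous_zImageEquiv
  continuous_invFun := continuous_zImageEquiv_symm

end BaireOne

theorem structSpace_homeomorph_zbUltrafilters_general
    (X : Type*) [TopologicalSpace X] :
    ∃ h : StructSpace ↥(baireOne X) ≃ₜ ZBUltra X,
      ∀ M : StructSpace ↥(baireOne X),
        ((h M).1 : Set (Set X)) =
          {Z | ∃ f ∈ (M.1 : Set ↥(baireOne X)), Z = {x | (f : X → ℝ) x = 0}} :=
  ⟨zImageHomeomorph, fun _ => rfl⟩

/-- For a Tychonoff space `X`, the map `M ↦ Z[M] = {Z(f) : f ∈ M}` is a homeomorphism of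
the structure space of `B₁(X)` (with the hull-kernel topology) onto the space of
`Z_B`-ultrafilters on `X` (with the Stone topology). -/
theorem structSpace_homeomorph_zbUltrafilters
    (X : Type*) [TopologicalSpace X] [CompletelyRegularSpace X] [T2Space X] :
    ∃ h : StructSpace ↥(baireOne X) ≃ₜ ZBUltra X,
      ∀ M : StructSpace ↥(baireOne X),
        ((h M).1 : Set (Set X)) =
          {Z | ∃ f ∈ (M.1 : Set ↥(baireOne X)), Z = {x | (f : X → ℝ) x = 0}} :=
  structSpace_homeomorph_zbUltrafilters_general X
end

section
/- Let X be a T_4 space (normal and Hausdorff). The map ψ : X → M(B_1(X)) given by ψ(x) = M_x = {f ∈ B_1(X) : f(x) = 0} satisfies: (i) ψ is injective; (ii) for every f ∈ B_1(X), ψ⁻¹(M̂_f) = Z(f), which is a G_δ subset of X (so ψ pulls back every basic closed set of M(B_1(X)) to a G_δ set); (iii) the inverse map ψ⁻¹ : ψ(X) → X is continuous, where ψ(X) carries the subspace topology; and (iv) ψ(X) is dense in M(B_1(X)). That is, X is densely weak F_σ-embedded in M(B_1(X)). -/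
open Filter Topology

/-! Evaluation at `x` is a surjective ring map `B₁(X) → ℝ`, so its kernel `M_x` is maximal.
Since `B₁(X)` contains the continuous functions, in a Tychonoff space every open `U ∋ x` is
witnessed by some `f` with `f x ≠ 0` vanishing off `U`; this makes `x ↦ M_x` injective and open
onto its image. The sets `{M | f ∉ M}` are closed under intersection (`fg ∉ M` iff `f ∉ M` and
`g ∉ M`, as `M` is prime), so they form a basis, and `ψ(X)` meets each nonempty one because a
nonzero `f` does not vanish at some point. Zero sets are `G_δ` because for a pointwise limit
`f = lim Fₙ` of continuous functions, `f x ≤ a` iff for every `k` infinitely many `Fₙ x` are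
below `a + 1/(k+1)`. -/

namespace StructSpace

variable {R : Type*} [CommRing R]

def basicOpen (f : R) : Set (StructSpace R) := {M | f ∉ M.1}

lemma basicOpen_one : basicOpen (1 : R) = Set.univ :=
  Set.eq_univ_of_forall fun M => (Ideal.ne_top_iff_one M.1).1 M.2.ne_top

lemma basicOpen_mul (f g : R) : basicOpen (f * g) = basicOpen f ∩ basicOpen g := by
  ext M
  simp [basicOpen, M.2.isPrime.mul_mem_iff_mem_or_mem, not_or]

lemma isTopologicalBasis_basicOpen :
    TopologicalSpace.IsTopologicalBasis (Set.range (basicOpen (R := R))) := by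
  refine TopologicalSpace.isTopologicalBasis_of_subbasis_of_finiteInter ?_
    { univ_mem := ⟨1, basicOpen_one⟩
      inter_mem := by
        rintro _ ⟨f, rfl⟩ _ ⟨g, rfl⟩
        exact ⟨f * g, basicOpen_mul f g⟩ }
  show TopologicalSpace.generateFrom _ = TopologicalSpace.generateFrom _
  congr 1
  ext U
  exact exists_congr fun _ => eq_comm

lemma isOpen_basicOpen (f : R) : IsOpen (basicOpen f) :=
  isTopologicalBasis_basicOpen.isOpen ⟨f, rfl⟩

lemma dense_of_forall_ne_zero {S : Set (StructSpace R)}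
    (hS : ∀ f : R, f ≠ 0 → ∃ M ∈ S, f ∉ M.1) : Dense S := by
  refine isTopologicalBasis_basicOpen.dense_iff.2 ?_
  rintro _ ⟨f, rfl⟩ ⟨M₀, hfM₀⟩
  obtain ⟨M, hMS, hfM⟩ := hS f fun hf => hfM₀ (hf ▸ M₀.1.zero_mem)
  exact ⟨M, hfM, hMS⟩

end StructSpace

theorem isGδ_setOf_le_of_tendsto {X : Type*} [TopologicalSpace X] {F : ℕ → X → ℝ}
    {f : X → ℝ} (hF : ∀ n, Continuous (F n))
    (hlim : ∀ x, Tendsto (fun n => F n x) atTop (𝓝 (f x))) (a : ℝ) :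
    IsGδ {x | f x ≤ a} := by
  have setOf_le_eq : {x | f x ≤ a} =
      ⋂ (k : ℕ) (N : ℕ), ⋃ (n : ℕ) (_ : N ≤ n), {x | F n x < a + 1 / (k + 1)} := by
    ext x
    simp only [Set.mem_ofPred_eq, Set.mem_iInter, Set.mem_iUnion, exists_prop,
      ← frequently_atTop]
    constructor
    · intro hx k
      have : f x < a + 1 / (k + 1) := by linarith [Nat.one_div_pos_of_nat (α := ℝ) (n := k)]
      exact ((hlim x).eventually (eventually_lt_nhds this)).frequently
    · intro h
      have hle : ∀ k : ℕ, f x ≤ a + 1 / (k + 1) := fun k =>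
        le_of_tendsto_of_frequently (hlim x) ((h k).mono fun _ => le_of_lt)
      simpa using ge_of_tendsto' (tendsto_one_div_add_atTop_nhds_zero_nat.const_add a) hle
  rw [setOf_le_eq]
  exact IsGδ.iInter fun k => IsGδ.iInter fun N =>
    (isOpen_biUnion fun n _ => isOpen_lt (hF n) continuous_const).isGδ

namespace baireOne

variable {X : Type*} [TopologicalSpace X]

lemma mem_of_continuous {f : X → ℝ} (hf : Continuous f) : f ∈ baireOne X :=
  ⟨fun _ => ⟨f, hf⟩, fun _ => tendsto_const_nhds⟩

lemma isGδ_zeroSet (f : baireOne X) : IsGδ {x | (f : X → ℝ) x = 0} := by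
  obtain ⟨F, hF⟩ := f.2
  simpa only [abs_nonpos_iff] using
    isGδ_setOf_le_of_tendsto (fun n => (F n).continuous.abs) (fun x => (hF x).abs) 0

def eval (x : X) : baireOne X →+* ℝ :=
  (Pi.evalRingHom (fun _ => ℝ) x).comp (baireOne X).subtype

lemma eval_surjective (x : X) : Function.Surjective (eval x) := fun r =>
  ⟨⟨fun _ => r, mem_of_continuous continuous_const⟩, rfl⟩

def maxIdealAt (x : X) : StructSpace (baireOne X) :=
  ⟨RingHom.ker (eval x), RingHom.ker_isMaximal_of_surjective _ (eval_surjective x)⟩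

lemma mem_maxIdealAt {x : X} {f : baireOne X} : f ∈ (maxIdealAt x).1 ↔ (f : X → ℝ) x = 0 :=
  Iff.rfl

lemma dense_range_maxIdealAt : Dense (Set.range (maxIdealAt (X := X))) :=
  StructSpace.dense_of_forall_ne_zero fun f hf => by
    obtain ⟨x, hx⟩ := Function.ne_iff.1 (Subtype.coe_injective.ne hf)
    exact ⟨maxIdealAt x, ⟨x, rfl⟩, hx⟩

lemma exists_ne_zero_of_mem_isOpen [CompletelyRegularSpace X] {U : Set X} (hU : IsOpen U)
    {x : X} (hx : x ∈ U) : ∃ f : baireOne X, (f : X → ℝ) x ≠ 0 ∧ ∀ y ∉ U, (f : X → ℝ) y = 0 := by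
  obtain ⟨g, hg, hgx, hgU⟩ := completelyRegularSpace_iff_isOpen.1 ‹_› x U hU hx
  refine ⟨⟨fun y => 1 - g y, mem_of_continuous (continuous_const.sub
    (continuous_subtype_val.comp hg))⟩, by simp [hgx], fun y hy => ?_⟩
  simp [hgU hy]

lemma maxIdealAt_injective [T35Space X] : Function.Injective (maxIdealAt (X := X)) := by
  intro x y hxy
  by_contra hne
  obtain ⟨f, hfx, hfy⟩ := exists_ne_zero_of_mem_isOpen isOpen_compl_singleton
    (Set.mem_compl_singleton_iff.2 hne)
  exact hfx (mem_maxIdealAt.1 (hxy ▸ mem_maxIdealAt.2 (hfy y (by simp))))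

lemma isOpenMap_rangeFactorization_maxIdealAt [CompletelyRegularSpace X] :
    IsOpenMap (Set.rangeFactorization (maxIdealAt (X := X))) := by
  intro U hU
  refine isOpen_iff_forall_mem_open.2 ?_
  rintro _ ⟨x, hx, rfl⟩
  obtain ⟨f, hfx, hfU⟩ := exists_ne_zero_of_mem_isOpen hU hx
  refine ⟨Subtype.val ⁻¹' StructSpace.basicOpen f, ?_,
    (StructSpace.isOpen_basicOpen f).preimage continuous_subtype_val, hfx⟩
  rintro ⟨_, y, rfl⟩ hfy
  by_contra hy
  exact hfy (hfU y fun hyU => hy ⟨y, hyU, rfl⟩)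

lemma continuous_ofInjective_symm_maxIdealAt [T35Space X] :
    Continuous (Equiv.ofInjective _ (maxIdealAt_injective (X := X))).symm :=
  (Equiv.continuous_symm_iff _).2 isOpenMap_rangeFactorization_maxIdealAt

end baireOne

/-- A `T₄` space `X` is densely weak `F_σ`-embedded in the structure space of `B₁(X)`:
the map `ψ : x ↦ M_x = {f : f(x) = 0}` is injective, pulls back each basic closed set
`M̂_f` to the `G_δ` set `Z(f)`, its inverse `ψ⁻¹ : ψ(X) → X` is continuous, and `ψ(X)`
is dense in the structure space. -/
theorem densely_weak_fsigma_embedded (X : Type*) [TopologicalSpace X] [T4Space X] :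
    ∃ ψ : X → StructSpace ↥(baireOne X),
      (∀ x : X, ((ψ x).1 : Set ↥(baireOne X)) = {f : ↥(baireOne X) | (f : X → ℝ) x = 0}) ∧
      Function.Injective ψ ∧
      (∀ f : ↥(baireOne X),
        ψ ⁻¹' {M : StructSpace ↥(baireOne X) | f ∈ M.1} = {x : X | (f : X → ℝ) x = 0} ∧
        IsGδ {x : X | (f : X → ℝ) x = 0}) ∧
      (∃ φ : Set.range ψ → X, Continuous φ ∧ ∀ x : X, φ ⟨ψ x, Set.mem_range_self x⟩ = x) ∧
      Dense (Set.range ψ) :=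
  ⟨baireOne.maxIdealAt, fun _ => Set.ext fun _ => baireOne.mem_maxIdealAt,
    baireOne.maxIdealAt_injective,
    fun f => ⟨Set.ext fun _ => baireOne.mem_maxIdealAt, baireOne.isGδ_zeroSet f⟩,
    ⟨_, baireOne.continuous_ofInjective_symm_maxIdealAt, Equiv.ofInjective_symm_apply _⟩,
    baireOne.dense_range_maxIdealAt⟩
end

section
/- Let X be a normal topological space, Y any topological space, ψ : X → Y an F_σ-continuous function, and h : Y → ℝ a continuous function. Then h ∘ ψ ∈ B_1(X). -/
open Filter Topology

/-- An `F_σ` subset of a topological space: a countable union of closed sets. -/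
def IsFsigma {α : Type*} [TopologicalSpace α] (s : Set α) : Prop :=
  ∃ T : Set (Set α), T.Countable ∧ (∀ t ∈ T, IsClosed t) ∧ s = ⋃₀ T

/-- A function is `F_σ`-continuous if the preimage of every open set is an `F_σ` set. -/
def FSigmaContinuous {α β : Type*} [TopologicalSpace α] [TopologicalSpace β]
    (f : α → β) : Prop :=
  ∀ U : Set β, IsOpen U → IsFsigma (f ⁻¹' U)

/-!
Split each `F_σ` set `f⁻¹' (p, q)`, `p q ∈ ℚ`, into closed pieces and enumerate all pieces as
`C j`, with interval `[a j, b j] = [p, q]`. Inductively, continuous `g n` maps each of the first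
`n` pieces into its interval. To add `C n`, blend (Urysohn) `g n` with its clamp into `[a n, b n]`:
take the clamp on `C n` and `g n` itself on the earlier pieces whose interval misses `[a n, b n]`,
which are disjoint from `C n`. On the remaining earlier pieces, `g n` and its clamp are both
already in the right interval. Every point lies in pieces with arbitrarily short intervals, so
`g n → f` pointwise.
-/

open Set

lemma IsFsigma.exists_closed_seq {α : Type*} [TopologicalSpace α] {s : Set α}
    (hs : IsFsigma s) : ∃ E : ℕ → Set α, (∀ m, IsClosed (E m)) ∧ s = ⋃ m, E m := by
  obtain ⟨T, hT, hTcl, rfl⟩ := hs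
  obtain ⟨E, hE⟩ := (hT.insert ∅).exists_eq_range (insert_nonempty _ _)
  refine ⟨E, fun m => ?_, ?_⟩
  · rcases (hE ▸ mem_range_self m : E m ∈ insert ∅ T) with h | h
    · exact h ▸ isClosed_empty
    · exact hTcl _ h
  · rw [← sUnion_range, ← hE, sUnion_insert, empty_union]

lemma FSigmaContinuous.comp_continuous {α β γ : Type*} [TopologicalSpace α]
    [TopologicalSpace β] [TopologicalSpace γ] {ψ : α → β} {h : β → γ}
    (hψ : FSigmaContinuous ψ) (hh : Continuous h) : FSigmaContinuous (h ∘ ψ) :=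
  fun _ hU => hψ _ (hU.preimage hh)

lemma max_min_mem_Icc_of_mem_Icc {α : Type*} [LinearOrder α] {a b a' b' t : α}
    (ht : t ∈ Icc a' b') (ha : a ≤ b') (hb : a' ≤ b) : max a (min b t) ∈ Icc a' b' :=
  ⟨le_max_of_le_right (le_min hb ht.1), max_le ha ((min_le_right _ _).trans ht.2)⟩

section Normal

variable {X : Type*} [TopologicalSpace X] [NormalSpace X]

theorem exists_continuous_mem_segment_eqOn_eqOn {E : Type*} [TopologicalSpace E]
    [AddCommGroup E] [Module ℝ E] [ContinuousAdd E] [ContinuousSMul ℝ E]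
    {D K : Set X} (hD : IsClosed D) (hK : IsClosed K) (hDK : Disjoint D K) (g₀ g₁ : C(X, E)) :
    ∃ g : C(X, E), (∀ x, g x ∈ segment ℝ (g₀ x) (g₁ x)) ∧ EqOn g g₀ D ∧ EqOn g g₁ K := by
  obtain ⟨u, hu0, hu1, hu⟩ := exists_continuous_zero_one_of_isClosed hD hK hDK
  refine ⟨⟨fun x => (1 - u x) • g₀ x + u x • g₁ x, by fun_prop⟩, fun x => ?_,
    fun x hx => ?_, fun x hx => ?_⟩
  · rw [segment_eq_image]
    exact ⟨u x, hu x, rfl⟩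
  · simp [hu0 hx]
  · simp [hu1 hx]

/-- The witness `w` only guarantees that two pieces meeting each other have overlapping
intervals. -/
theorem exists_continuous_forall_lt_mapsTo_Icc {C : ℕ → Set X} (hC : ∀ j, IsClosed (C j))
    {a b : ℕ → ℝ} {w : X → ℝ} (hw : ∀ j, MapsTo w (C j) (Icc (a j) (b j))) (n : ℕ) :
    ∃ g : C(X, ℝ), ∀ j < n, MapsTo g (C j) (Icc (a j) (b j)) := by
  induction n with
  | zero => exact ⟨0, fun j hj => absurd hj j.not_lt_zero⟩
  | succ n ih =>
    obtain ⟨g, hg⟩ := ih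
    set far := (Finset.range n).filter fun j => ¬(a n ≤ b j ∧ a j ≤ b n)
    have hfar : Disjoint (⋃ j ∈ far, C j) (C n) := by
      refine disjoint_left.2 fun x hx hxn => ?_
      obtain ⟨j, hj, hxj⟩ := mem_iUnion₂.1 hx
      have hwj := hw j hxj
      have hwn := hw n hxn
      exact (Finset.mem_filter.1 hj).2 ⟨hwn.1.trans hwj.2, hwj.1.trans hwn.2⟩
    obtain ⟨g', hseg, hg'far, hg'n⟩ := exists_continuous_mem_segment_eqOn_eqOn
      (isClosed_biUnion_finset fun j _ => hC j) (hC n) hfar g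
      ⟨fun x => max (a n) (min (b n) (g x)), by fun_prop⟩
    refine ⟨g', fun j hj x hx => ?_⟩
    rcases Nat.lt_succ_iff_lt_or_eq.1 hj with hj | rfl
    · by_cases hov : a n ≤ b j ∧ a j ≤ b n
      · exact (convex_Icc (a j) (b j)).segment_subset (hg j hj hx)
          (max_min_mem_Icc_of_mem_Icc (hg j hj hx) hov.1 hov.2) (hseg x)
      · have hxfar : x ∈ ⋃ i ∈ far, C i :=
          mem_biUnion (Finset.mem_filter.2 ⟨Finset.mem_range.2 hj, hov⟩) hx
        exact hg'far hxfar ▸ hg j hj hx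
    · have hab := (hw j hx).1.trans (hw j hx).2
      exact hg'n hx ▸ ⟨le_max_left _ _, max_le hab (min_le_left _ _)⟩

end Normal

theorem FSigmaContinuous.exists_closed_seq_fine_cover {X : Type*} [TopologicalSpace X]
    {f : X → ℝ} (hf : FSigmaContinuous f) :
    ∃ (C : ℕ → Set X) (a b : ℕ → ℝ), (∀ j, IsClosed (C j)) ∧
      (∀ j, MapsTo f (C j) (Icc (a j) (b j))) ∧ ∀ x, ∀ ε > 0, ∃ j, x ∈ C j ∧ b j - a j < ε := by
  choose E hEcl hE using fun pq : ℚ × ℚ =>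
    (hf _ (isOpen_Ioo (a := (pq.1 : ℝ)) (b := pq.2))).exists_closed_seq
  obtain ⟨σ, hσ⟩ := exists_surjective_nat ((ℚ × ℚ) × ℕ)
  refine ⟨fun j => E (σ j).1 (σ j).2, fun j => (σ j).1.1, fun j => (σ j).1.2,
    fun j => hEcl _ _, fun j x hx => ?_, fun x ε hε => ?_⟩
  · have hx' : x ∈ f ⁻¹' Ioo _ _ := (hE (σ j).1).symm ▸ mem_iUnion_of_mem _ hx
    exact Ioo_subset_Icc_self hx'
  · obtain ⟨p, hp, hpx⟩ := exists_rat_btwn (by linarith : f x - ε / 2 < f x)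
    obtain ⟨q, hxq, hq⟩ := exists_rat_btwn (by linarith : f x < f x + ε / 2)
    obtain ⟨m, hm⟩ := mem_iUnion.1 ((hE (p, q)) ▸ ⟨hpx, hxq⟩ : x ∈ ⋃ m, E (p, q) m)
    obtain ⟨j, hj⟩ := hσ ((p, q), m)
    refine ⟨j, by simpa [hj] using hm, ?_⟩
    simp only [hj]
    linarith

theorem FSigmaContinuous.mem_baireOne {X : Type*} [TopologicalSpace X] [NormalSpace X]
    {f : X → ℝ} (hf : FSigmaContinuous f) : f ∈ baireOne X := by
  obtain ⟨C, a, b, hC, hfC, hfine⟩ := hf.exists_closed_seq_fine_cover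
  choose g hg using exists_continuous_forall_lt_mapsTo_Icc hC hfC
  refine ⟨g, fun x => Metric.tendsto_atTop.2 fun ε hε => ?_⟩
  obtain ⟨j, hxj, hj⟩ := hfine x ε hε
  exact ⟨j + 1, fun n hn =>
    (Real.dist_le_of_mem_Icc (hg n j (by omega) hxj) (hfC j hxj)).trans_lt hj⟩

/-- If `X` is normal, `ψ : X → Y` is `F_σ`-continuous and `h : Y → ℝ` is continuous,
then `h ∘ ψ` is a Baire one function on `X`. -/
theorem continuous_comp_fsigmaContinuous_mem_baireOne
    {X Y : Type*} [TopologicalSpace X] [TopologicalSpace Y] [NormalSpace X]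
    (ψ : X → Y) (hψ : FSigmaContinuous ψ) (h : Y → ℝ) (hh : Continuous h) :
    h ∘ ψ ∈ baireOne X :=
  (hψ.comp_continuous hh).mem_baireOne
end

section
/- Let X be a T_4 space (normal and Hausdorff). The map η : B_1*(X) → C(M(B_1(X)), ℝ) sending each bounded Baire one function f to its unique continuous extension f̂ (the unique continuous function on M(B_1(X)) satisfying f̂ ∘ ψ = f) is a ring isomorphism of B_1*(X) onto the ring C(M(B_1(X)), ℝ) of continuous real-valued functions on M(B_1(X)). In particular, B_1*(X) is isomorphic to the ring of all continuous real-valued functions on a compact Hausdorff space. -/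
open Filter Topology

/-!
For a maximal ideal `M` of a ring `A` of real functions that is closed under continuous
post-composition and under inverting nowhere-vanishing functions, the zero sets of the members
of `M` generate a proper filter on `X`, and maximality forces every bounded `f ∈ A` to converge
along it: if `|f - r| ≤ ε` is not eventually true at a cluster point `r`, then `|f - r| > ε` is.
This limit is `f̂(M)`; sums, products and constants pass to the limit, `f̂(M_x) = f x`, and
`f̂` is continuous since `|f̂ - f̂(M)| ≤ ε` on the basic open set `{N | (ε - |f - f̂(M)|)⁺ ∉ N}`.
So `f ↦ f̂` is an injective ring homomorphism. Its image separates points (via `a² / (a² + m²)`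
with `a ∈ M \ M'` and `m ∈ M'` without common zeros), hence is dense by Stone–Weierstrass, and
it is closed because Baire one functions are closed under uniform limits.
-/

instance (R : Type*) [CommRing R] : CompactSpace (StructSpace R) := by
  classical
  -- Alexander's subbasis theorem: the members of a subbasic cover generate the unit ideal
  refine compactSpace_generateFrom rfl fun P hP hcover => ?_
  choose! f hf using hP
  have hone : (1 : R) ∈ Ideal.span (f '' P) := by
    by_contra h1
    obtain ⟨M, hM, hle⟩ := Ideal.exists_le_maximal _ ((Ideal.ne_top_iff_one _).2 h1)
    obtain ⟨U, hUP, hMU⟩ := Set.mem_sUnion.1 (hcover ▸ Set.mem_univ (⟨M, hM⟩ : StructSpace R))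
    rw [hf hUP] at hMU
    exact hMU (hle (Ideal.subset_span ⟨U, hUP, rfl⟩))
  obtain ⟨T, hTP, hT⟩ := Submodule.mem_span_finite_of_mem_span hone
  obtain ⟨Q, hQP, rfl⟩ := Finset.subset_set_image_iff.1 hTP
  refine ⟨Q, hQP, Q.finite_toSet, Set.eq_univ_of_forall fun M => ?_⟩
  by_contra hM
  have hle : Ideal.span (f '' Q) ≤ M.1 := by
    rw [Ideal.span_le]
    rintro _ ⟨U, hUQ, rfl⟩
    by_contra hfU
    exact hM ⟨U, hUQ, (hf (hQP hUQ)).symm ▸ hfU⟩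
  rw [Finset.coe_image] at hT
  exact M.2.ne_top ((Ideal.eq_top_iff_one _).2 (hle hT))

namespace Subring

variable {X : Type*}

structure IsCompInvClosed (A : Subring (X → ℝ)) : Prop where
  comp_mem {f : X → ℝ} (hf : f ∈ A) {φ : ℝ → ℝ} (hφ : Continuous φ) : φ ∘ f ∈ A
  inv_mem {f : X → ℝ} (hf : f ∈ A) (h0 : ∀ x, f x ≠ 0) : f⁻¹ ∈ A

variable {A : Subring (X → ℝ)}

theorem IsCompInvClosed.const_mem (hA : A.IsCompInvClosed) (c : ℝ) : (fun _ => c) ∈ A :=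
  hA.comp_mem A.zero_mem (continuous_const (y := c))

theorem IsCompInvClosed.isUnit (hA : A.IsCompInvClosed) {g : A}
    (hg : ∀ x, (g : X → ℝ) x ≠ 0) : IsUnit g :=
  IsUnit.of_mul_eq_one (b := ⟨_, hA.inv_mem g.2 hg⟩)
    (Subtype.ext (funext fun x => mul_inv_cancel₀ (hg x)))

def zeroSetFilter (M : Ideal A) : Filter X where
  sets := {S | ∃ g ∈ M, {x | (g : X → ℝ) x = 0} ⊆ S}
  univ_sets := ⟨0, M.zero_mem, Set.subset_univ _⟩
  sets_of_superset := fun ⟨g, hg, hgS⟩ hST => ⟨g, hg, hgS.trans hST⟩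
  inter_sets := by
    rintro S T ⟨g, hg, hgS⟩ ⟨h, hh, hhT⟩
    refine ⟨g * g + h * h, M.add_mem (M.mul_mem_left g hg) (M.mul_mem_left h hh),
      fun x hx => ?_⟩
    have hx : (g : X → ℝ) x * (g : X → ℝ) x + (h : X → ℝ) x * (h : X → ℝ) x = 0 := hx
    exact ⟨hgS (mul_self_add_mul_self_eq_zero.1 hx).1, hhT (mul_self_add_mul_self_eq_zero.1 hx).2⟩

theorem zeroSet_mem_zeroSetFilter {M : Ideal A} {g : A} (hg : g ∈ M) :
    {x | (g : X → ℝ) x = 0} ∈ zeroSetFilter M :=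
  ⟨g, hg, subset_rfl⟩

theorem nonzeroSet_mem_zeroSetFilter {M : Ideal A} (hM : M.IsMaximal) {g : A} (hg : g ∉ M) :
    {x | (g : X → ℝ) x ≠ 0} ∈ zeroSetFilter M := by
  obtain ⟨b, m, hm, hbm⟩ := hM.exists_inv hg
  refine ⟨m, hm, fun x (hx : (m : X → ℝ) x = 0) hgx => ?_⟩
  have := congrFun (congrArg Subtype.val hbm) x
  simp [hx, hgx] at this

theorem zeroSetFilter_neBot (hA : A.IsCompInvClosed) {M : Ideal A} (hM : M ≠ ⊤) :
    (zeroSetFilter M).NeBot := by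
  refine ⟨fun hbot => ?_⟩
  obtain ⟨g, hg, hg0⟩ := empty_mem_iff_bot.2 hbot
  exact hM (M.eq_top_of_isUnit_mem hg (hA.isUnit fun x hx => hg0 hx))

theorem IsCompInvClosed.exists_tendsto_zeroSetFilter (hA : A.IsCompInvClosed) {M : Ideal A}
    (hM : M.IsMaximal) {f : X → ℝ} (hf : f ∈ A) (hb : ∃ C, ∀ x, |f x| ≤ C) :
    ∃ r, Tendsto f (zeroSetFilter M) (𝓝 r) := by
  have := zeroSetFilter_neBot hA hM.ne_top
  obtain ⟨C, hC⟩ := hb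
  obtain ⟨r, -, hr⟩ := (isCompact_closedBall (0 : ℝ) C).exists_clusterPt
    (f := Filter.map f (zeroSetFilter M))
    (le_principal_iff.2 (Filter.mem_map.2 (univ_mem' fun x => mem_closedBall_zero_iff.2 (hC x))))
  refine ⟨r, Metric.tendsto_nhds.2 fun ε hε => ?_⟩
  let g : A := ⟨_, hA.comp_mem hf (φ := fun t => max (|t - r| - ε / 2) 0) (by fun_prop)⟩
  by_cases hg : g ∈ M
  · refine mem_of_superset (zeroSet_mem_zeroSetFilter hg) fun x (hx : max _ _ = _) => ?_
    show dist (f x) r < ε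
    rw [Real.dist_eq]
    linarith [le_max_left (|f x - r| - ε / 2) 0]
  · obtain ⟨x, hxr, hxg⟩ := ((frequently_map.1 (hr.frequently
      (Metric.ball_mem_nhds r (half_pos hε)))).and_eventually
      (nonzeroSet_mem_zeroSetFilter hM hg)).exists
    refine absurd (max_eq_right ?_) hxg
    rw [Real.dist_eq] at hxr
    linarith

/-- `f̂(M)`. -/
noncomputable def zeroSetLim (M : Ideal A) (f : X → ℝ) : ℝ :=
  limUnder (zeroSetFilter M) f

theorem IsCompInvClosed.tendsto_zeroSetLim (hA : A.IsCompInvClosed) {M : Ideal A}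
    (hM : M.IsMaximal) {f : X → ℝ} (hf : f ∈ A) (hb : ∃ C, ∀ x, |f x| ≤ C) :
    Tendsto f (zeroSetFilter M) (𝓝 (zeroSetLim M f)) :=
  tendsto_nhds_limUnder (hA.exists_tendsto_zeroSetFilter hM hf hb)

theorem IsCompInvClosed.zeroSetLim_eq (hA : A.IsCompInvClosed) {M : Ideal A} (hM : M ≠ ⊤)
    {f : X → ℝ} {r : ℝ} (h : Tendsto f (zeroSetFilter M) (𝓝 r)) : zeroSetLim M f = r := by
  have := zeroSetFilter_neBot hA hM
  exact h.limUnder_eq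

theorem IsCompInvClosed.zeroSetLim_eq_of_eventuallyEq (hA : A.IsCompInvClosed) {M : Ideal A}
    (hM : M ≠ ⊤) {f : X → ℝ} {r : ℝ} (h : ∀ᶠ x in zeroSetFilter M, f x = r) :
    zeroSetLim M f = r :=
  hA.zeroSetLim_eq hM (tendsto_const_nhds.congr' (h.mono fun _ hx => hx.symm))

theorem IsCompInvClosed.zeroSetLim_mem (hA : A.IsCompInvClosed) {M : Ideal A}
    (hM : M.IsMaximal) {f : X → ℝ} (hf : f ∈ A) (hb : ∃ C, ∀ x, |f x| ≤ C) {K : Set ℝ}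
    (hK : IsClosed K) (hfK : ∀ᶠ x in zeroSetFilter M, f x ∈ K) : zeroSetLim M f ∈ K := by
  have := zeroSetFilter_neBot hA hM.ne_top
  exact hK.mem_of_tendsto (hA.tendsto_zeroSetLim hM hf hb) hfK

theorem IsCompInvClosed.zeroSetLim_eq_apply (hA : A.IsCompInvClosed) {M : Ideal A} {x : X}
    (hM : (M : Set A) = {g : A | (g : X → ℝ) x = 0}) {f : X → ℝ} (hf : f ∈ A) :
    zeroSetLim M f = f x := by
  have hg : (⟨_, A.sub_mem hf (hA.const_mem (f x))⟩ : A) ∈ M := by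
    rw [← SetLike.mem_coe, hM]
    exact sub_self (f x)
  refine hA.zeroSetLim_eq_of_eventuallyEq (fun htop => ?_) ?_
  · have : (1 : A) ∈ (M : Set A) := htop ▸ Submodule.mem_top
    rw [hM] at this
    exact one_ne_zero this
  · exact mem_of_superset (zeroSet_mem_zeroSetFilter hg) fun y hy => sub_eq_zero.1 hy

theorem IsCompInvClosed.continuous_zeroSetLim (hA : A.IsCompInvClosed) {f : X → ℝ}
    (hf : f ∈ A) (hb : ∃ C, ∀ x, |f x| ≤ C) :
    Continuous fun M : StructSpace A => zeroSetLim M.1 f := by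
  refine continuous_iff_continuousAt.2 fun M₀ => Metric.tendsto_nhds.2 fun ε hε => ?_
  set r₀ := zeroSetLim M₀.1 f
  let u : A := ⟨_, hA.comp_mem hf (φ := fun t => max (ε / 2 - |t - r₀|) 0) (by fun_prop)⟩
  have hu : ∀ x, (u : X → ℝ) x ≠ 0 → |f x - r₀| < ε / 2 := fun x hx => by
    by_contra! h
    exact hx (max_eq_right (by linarith))
  have hM₀ : u ∉ M₀.1 := fun huM => by
    have := zeroSetFilter_neBot hA M₀.2.ne_top
    obtain ⟨x, hx, hxu⟩ := ((Metric.tendsto_nhds.1 (hA.tendsto_zeroSetLim M₀.2 hf hb) _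
      (half_pos hε)).and (zeroSet_mem_zeroSetFilter huM)).exists
    have hxu : max (ε / 2 - |f x - r₀|) 0 = 0 := hxu
    rw [Real.dist_eq] at hx
    linarith [le_max_left (ε / 2 - |f x - r₀|) 0]
  have hU : IsOpen {N : StructSpace A | u ∉ N.1} :=
    TopologicalSpace.isOpen_generateFrom_of_mem ⟨u, rfl⟩
  refine mem_of_superset (hU.mem_nhds hM₀) fun N (hN : u ∉ N.1) => ?_
  have := hA.zeroSetLim_mem N.2 hf hb Metric.isClosed_closedBall
    (mem_of_superset (nonzeroSet_mem_zeroSetFilter N.2 hN) fun x hx =>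
      (Metric.mem_closedBall.2 (Real.dist_eq _ _ ▸ (hu x hx).le) :
        f x ∈ Metric.closedBall r₀ (ε / 2)))
  exact (Metric.mem_closedBall.1 this).trans_lt (half_lt_self hε)

theorem IsCompInvClosed.exists_zeroSetLim_eq_zero_and_eq_one (hA : A.IsCompInvClosed)
    {M M' : StructSpace A} (hne : M ≠ M') :
    ∃ f ∈ A, (∀ x, |f x| ≤ 1) ∧ zeroSetLim M.1 f = 0 ∧ zeroSetLim M'.1 f = 1 := by
  obtain ⟨a, haM, haM'⟩ := SetLike.not_le_iff_exists.1 fun hle =>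
    hne (Subtype.ext (M.2.eq_of_le M'.2.ne_top hle))
  obtain ⟨m, hmM', hma⟩ := nonzeroSet_mem_zeroSetFilter M'.2 haM'
  have hs : ∀ x, (a : X → ℝ) x * (a : X → ℝ) x + (m : X → ℝ) x * (m : X → ℝ) x ≠ 0 :=
    fun x hx => hma (mul_self_add_mul_self_eq_zero.1 hx).2 (mul_self_add_mul_self_eq_zero.1 hx).1
  let f : X → ℝ := fun x => (a : X → ℝ) x * (a : X → ℝ) x /
    ((a : X → ℝ) x * (a : X → ℝ) x + (m : X → ℝ) x * (m : X → ℝ) x)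
  have hf : f ∈ A := A.mul_mem (A.mul_mem a.2 a.2) (hA.inv_mem (a * a + m * m).2 hs)
  have hs0 : ∀ x, 0 ≤ (a : X → ℝ) x * (a : X → ℝ) x + (m : X → ℝ) x * (m : X → ℝ) x :=
    fun x => add_nonneg (mul_self_nonneg _) (mul_self_nonneg _)
  have hf0 : ∀ x, 0 ≤ f x := fun x => div_nonneg (mul_self_nonneg _) (hs0 x)
  have hf1 : ∀ x, f x ≤ 1 := fun x =>
    div_le_one_of_le₀ (le_add_of_nonneg_right (mul_self_nonneg _)) (hs0 x)
  refine ⟨f, hf, fun x => abs_le.2 ⟨by linarith [hf0 x], hf1 x⟩,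
    hA.zeroSetLim_eq_of_eventuallyEq M.2.ne_top ?_,
    hA.zeroSetLim_eq_of_eventuallyEq M'.2.ne_top ?_⟩
  · exact mem_of_superset (zeroSet_mem_zeroSetFilter haM) fun x (hx : _ = _) => by
      simp [f, hx]
  · exact mem_of_superset (zeroSet_mem_zeroSetFilter hmM') fun x (hx : _ = _) => by
      simpa [f, hx] using hma hx

end Subring

section BaireOne

open Subring

variable {X : Type*} [TopologicalSpace X]

theorem baireOne_isCompInvClosed : (baireOne X).IsCompInvClosed where
  comp_mem := by
    rintro f ⟨F, hF⟩ φ hφ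
    exact ⟨fun n => ⟨φ ∘ F n, hφ.comp (F n).continuous⟩,
      fun x => (hφ.tendsto (f x)).comp (hF x)⟩
  inv_mem := by
    rintro f ⟨F, hF⟩ hf0
    -- `t / (t² + 1/(n+1))` is continuous in `t` and tends to `t⁻¹` for `t ≠ 0`
    refine ⟨fun n => ⟨fun x => F n x / (F n x ^ 2 + 1 / (n + 1)), ?_⟩, fun x => ?_⟩
    · exact (F n).continuous.div (by fun_prop) fun x => by positivity
    · have hden : Tendsto (fun n : ℕ => F n x ^ 2 + 1 / (n + 1 : ℝ)) atTop (𝓝 (f x ^ 2)) := by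
        simpa using ((hF x).pow 2).add tendsto_one_div_add_atTop_nhds_zero_nat
      have := (hF x).div hden (pow_ne_zero 2 (hf0 x))
      rw [pow_two, div_mul_cancel_left₀ (hf0 x)] at this
      exact this

theorem tsum_mem_baireOne {h : ℕ → X → ℝ} {b : ℕ → ℝ} (hh : ∀ k, h k ∈ baireOne X)
    (hb : Summable b) (hhb : ∀ k x, |h k x| ≤ b k) : (fun x => ∑' k, h k x) ∈ baireOne X := by
  choose H hH using hh
  -- clamping `H k n` to `[-b k, b k]` keeps its limit and dominates the `k`-th terms by `b k`
  let clamp : ℕ → ℝ → ℝ := fun k t => max (-b k) (min t (b k))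
  have hclamp : ∀ k t, |t| ≤ b k → clamp k t = t := fun k t ht => by
    rw [abs_le] at ht
    simp only [clamp, min_eq_left ht.2, max_eq_right ht.1]
  let K : ℕ → ℕ → C(X, ℝ) := fun k n => ⟨fun x => clamp k (H k n x), by fun_prop⟩
  refine ⟨fun n => ∑ k ∈ Finset.range n, K k n, fun x => ?_⟩
  have hK : ∀ k, Tendsto (fun n => K k n x) atTop (𝓝 (h k x)) := fun k => by
    have hcont : Continuous (clamp k) := by fun_prop
    have := (hcont.tendsto (h k x)).comp (hH k x)
    rw [hclamp k _ (hhb k x)] at this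
    exact this
  have := tendsto_tsum_of_dominated_convergence (f := fun n k => if k < n then K k n x else 0)
    hb (fun k => (hK k).congr' ((eventually_gt_atTop k).mono fun n hn => (if_pos hn).symm))
    (Eventually.of_forall fun n k => ?_)
  · convert this using 2 with n
    rw [ContinuousMap.sum_apply,
      tsum_eq_sum (s := Finset.range n) fun k hk => if_neg (by simpa using hk)]
    exact Finset.sum_congr rfl fun k hk => (if_pos (Finset.mem_range.1 hk)).symm
  · have hb0 : 0 ≤ b k := (abs_nonneg _).trans (hhb k x)
    split_ifs
    · exact abs_le.2 ⟨le_max_left _ _, max_le (by linarith) (min_le_right _ _)⟩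
    · simpa using hb0

theorem mem_baireOne_of_tendstoUniformly {F : ℕ → X → ℝ} {f : X → ℝ}
    (hF : ∀ n, F n ∈ baireOne X) (hFf : TendstoUniformly F f atTop) : f ∈ baireOne X := by
  obtain ⟨G, hG, hGf⟩ : ∃ G : ℕ → X → ℝ, (∀ k, G k ∈ baireOne X) ∧
      ∀ k x, |G k x - f x| ≤ (1 / 2) ^ k := by
    choose n hn using fun k : ℕ =>
      (Metric.tendstoUniformly_iff.1 hFf _ (pow_pos (one_half_pos (α := ℝ)) k)).exists
    exact ⟨fun k => F (n k), fun k => hF _,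
      fun k x => by rw [abs_sub_comm, ← Real.dist_eq]; exact (hn k x).le⟩
  have hbound : ∀ k x, |G (k + 1) x - G k x| ≤ 2 * (1 / 2) ^ k := fun k x => by
    have := abs_sub_le (G (k + 1) x) (f x) (G k x)
    rw [abs_sub_comm (f x)] at this
    linarith [hGf (k + 1) x, hGf k x, pow_le_pow_of_le_one (by norm_num : (0 : ℝ) ≤ 1 / 2)
      (by norm_num) (Nat.le_add_right k 1)]
  have hsum : ∀ x, HasSum (fun k => G (k + 1) x - G k x) (f x - G 0 x) := fun x => by
    have hsummable : Summable fun k => ‖G (k + 1) x - G k x‖ :=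
      (summable_geometric_two.mul_left 2).of_nonneg_of_le (fun _ => norm_nonneg _) (hbound · x)
    refine (hasSum_iff_tendsto_nat_of_summable_norm hsummable).2 ?_
    simp_rw [Finset.sum_range_sub (fun k => G k x)]
    refine Tendsto.sub_const (tendsto_iff_dist_tendsto_zero.2 (squeeze_zero
      (fun _ => dist_nonneg) (fun k => (Real.dist_eq _ _).trans_le (hGf k x)) ?_)) _
    exact tendsto_pow_atTop_nhds_zero_of_lt_one (by norm_num) (by norm_num)
  have hf : f = G 0 + fun x => ∑' k, (G (k + 1) x - G k x) :=
    funext fun x => by simp [(hsum x).tsum_eq]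
  rw [hf]
  exact add_mem (hG 0) (tsum_mem_baireOne (fun k => sub_mem (hG _) (hG _))
    (summable_geometric_two.mul_left 2) hbound)

theorem tendsto_zeroSetLim_baireOneStar (f : baireOneStar X) (M : StructSpace (baireOne X)) :
    Tendsto f (zeroSetFilter M.1) (𝓝 (zeroSetLim M.1 f)) :=
  baireOne_isCompInvClosed.tendsto_zeroSetLim M.2 f.2.1 f.2.2

/-- The map `η : f ↦ f̂`. -/
noncomputable def baireOneStarExtend : baireOneStar X →+* C(StructSpace (baireOne X), ℝ) where
  toFun f := ⟨fun M => zeroSetLim M.1 f,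
    baireOne_isCompInvClosed.continuous_zeroSetLim f.2.1 f.2.2⟩
  map_one' := ContinuousMap.ext fun M => baireOne_isCompInvClosed.zeroSetLim_eq_of_eventuallyEq
    M.2.ne_top (Eventually.of_forall fun _ => rfl)
  map_zero' := ContinuousMap.ext fun M => baireOne_isCompInvClosed.zeroSetLim_eq_of_eventuallyEq
    M.2.ne_top (Eventually.of_forall fun _ => rfl)
  map_mul' f g := ContinuousMap.ext fun M => baireOne_isCompInvClosed.zeroSetLim_eq M.2.ne_top
    ((tendsto_zeroSetLim_baireOneStar f M).mul (tendsto_zeroSetLim_baireOneStar g M))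
  map_add' f g := ContinuousMap.ext fun M => baireOne_isCompInvClosed.zeroSetLim_eq M.2.ne_top
    ((tendsto_zeroSetLim_baireOneStar f M).add (tendsto_zeroSetLim_baireOneStar g M))

theorem baireOneStarExtend_apply_eq {ψ : X → StructSpace (baireOne X)}
    (hψ : ∀ x : X, ((ψ x).1 : Set (baireOne X)) = {g : baireOne X | (g : X → ℝ) x = 0})
    (f : baireOneStar X) (x : X) : baireOneStarExtend f (ψ x) = (f : X → ℝ) x :=
  baireOne_isCompInvClosed.zeroSetLim_eq_apply (hψ x) f.2.1

theorem baireOneStarExtend_injective {ψ : X → StructSpace (baireOne X)}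
    (hψ : ∀ x : X, ((ψ x).1 : Set (baireOne X)) = {g : baireOne X | (g : X → ℝ) x = 0}) :
    Function.Injective (baireOneStarExtend (X := X)) := fun f g hfg =>
  Subtype.ext (funext fun x => by
    rw [← baireOneStarExtend_apply_eq hψ, ← baireOneStarExtend_apply_eq hψ, hfg])

theorem dist_baireOneStarExtend_le {f g : baireOneStar X} {C : ℝ} (hC : 0 ≤ C)
    (hfg : ∀ x, |(f : X → ℝ) x - (g : X → ℝ) x| ≤ C) :
    dist (baireOneStarExtend f) (baireOneStarExtend g) ≤ C := by
  rw [dist_eq_norm, ← map_sub, ContinuousMap.norm_le _ hC]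
  exact fun M => mem_closedBall_zero_iff.1 (baireOne_isCompInvClosed.zeroSetLim_mem M.2
    (f - g).2.1 (f - g).2.2 Metric.isClosed_closedBall
    (Eventually.of_forall fun x => mem_closedBall_zero_iff.2 (hfg x)))

theorem denseRange_baireOneStarExtend : DenseRange (baireOneStarExtend (X := X)) := by
  let S : Subalgebra ℝ C(StructSpace (baireOne X), ℝ) :=
    { (baireOneStarExtend (X := X)).rangeS with
      algebraMap_mem' := fun c => ⟨⟨fun _ => c, baireOne_isCompInvClosed.const_mem c, |c|,
        fun _ => le_rfl⟩, ContinuousMap.ext fun M =>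
          baireOne_isCompInvClosed.zeroSetLim_eq_of_eventuallyEq M.2.ne_top
            (Eventually.of_forall fun _ => rfl)⟩ }
  have hS : S.SeparatesPoints := fun M M' hne => by
    obtain ⟨f, hf, hf1, hM, hM'⟩ :=
      baireOne_isCompInvClosed.exists_zeroSetLim_eq_zero_and_eq_one hne
    exact ⟨_, ⟨baireOneStarExtend ⟨f, hf, 1, hf1⟩, ⟨_, rfl⟩, rfl⟩, by
      simp [baireOneStarExtend, hM, hM']⟩
  exact ContinuousMap.continuousMap_mem_subalgebra_closure_of_separatesPoints S hS

theorem baireOneStarExtend_surjective {ψ : X → StructSpace (baireOne X)}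
    (hψ : ∀ x : X, ((ψ x).1 : Set (baireOne X)) = {g : baireOne X | (g : X → ℝ) x = 0}) :
    Function.Surjective (baireOneStarExtend (X := X)) := by
  intro h
  obtain ⟨y, hy, hyh⟩ := mem_closure_iff_seq_limit.1 (denseRange_baireOneStarExtend h)
  choose F hF using hy
  have hunif : TendstoUniformly (fun n x => (F n : X → ℝ) x) (h ∘ ψ) atTop := by
    have := (ContinuousMap.tendsto_iff_tendstoUniformly.1 hyh).comp ψ
    simpa [Function.comp_def, ← hF, baireOneStarExtend_apply_eq hψ] using this
  let f : baireOneStar X := ⟨h ∘ ψ, mem_baireOne_of_tendstoUniformly (fun n => (F n).2.1) hunif,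
    ‖h‖, fun x => h.norm_coe_le_norm (ψ x)⟩
  refine ⟨f, tendsto_nhds_unique ?_ hyh⟩
  refine Metric.tendsto_nhds.2 fun ε hε =>
    (Metric.tendstoUniformly_iff.1 hunif _ (half_pos hε)).mono fun n hn => ?_
  rw [← hF n]
  refine (dist_baireOneStarExtend_le (half_pos hε).le fun x => ?_).trans_lt (half_lt_self hε)
  rw [abs_sub_comm, ← Real.dist_eq]
  exact (hn x).le

end BaireOne

theorem baireOneStar_ringEquiv_continuousFunctions_general
    (X : Type*) [TopologicalSpace X]
    (ψ : X → StructSpace ↥(baireOne X))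
    (hψ : ∀ x : X, ((ψ x).1 : Set ↥(baireOne X)) = {g : ↥(baireOne X) | (g : X → ℝ) x = 0}) :
    ∃ η : ↥(baireOneStar X) ≃+* C(StructSpace ↥(baireOne X), ℝ),
      ∀ (f : ↥(baireOneStar X)) (x : X), η f (ψ x) = (f : X → ℝ) x :=
  ⟨RingEquiv.ofBijective baireOneStarExtend
    ⟨baireOneStarExtend_injective hψ, baireOneStarExtend_surjective hψ⟩,
    baireOneStarExtend_apply_eq hψ⟩

/-- For a `T₄` space `X`, the map `f ↦ f̂` sending each bounded Baire one function to its
continuous extension along `ψ : x ↦ M_x` is a ring isomorphism from `B₁*(X)` onto the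
ring of continuous real-valued functions on the (compact Hausdorff) structure space of
`B₁(X)`; i.e. `B₁*(X)` is a C-type ring. -/
theorem baireOneStar_ringEquiv_continuousFunctions
    (X : Type*) [TopologicalSpace X] [T4Space X]
    (ψ : X → StructSpace ↥(baireOne X))
    (hψ : ∀ x : X, ((ψ x).1 : Set ↥(baireOne X)) = {g : ↥(baireOne X) | (g : X → ℝ) x = 0}) :
    ∃ η : ↥(baireOneStar X) ≃+* C(StructSpace ↥(baireOne X), ℝ),
      ∀ (f : ↥(baireOneStar X)) (x : X), η f (ψ x) = (f : X → ℝ) x :=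
  baireOneStar_ringEquiv_continuousFunctions_general X ψ hψ
end

section
/- Let X be a T_4 space (normal and Hausdorff). Then the structure space M(B_1(X)) of B_1(X) is homeomorphic to the structure space M(B_1*(X)) of B_1*(X). -/
open Filter Topology

/-!
Only two closure properties of `B₁(X)` matter: it is stable under post-composition with continuous
maps `ℝ → ℝ` and under inversion of nowhere vanishing functions. So let `R` be any such subring of
`X → ℝ` and `S` its subring of bounded elements.

For a maximal ideal `M` of `R`, the zero sets of the elements of `M` form a filter `zeroFilter M`
on `X`, and `f ∈ M` as soon as its zero set belongs to it (maximal ideals are `z`-ideals). Since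
`M` is prime, for every `d` one of `{f ≤ d}`, `{f ≥ d}` lies in `zeroFilter M`, so every bounded
`f` converges along it; taking this limit is a surjective ring homomorphism `S → ℝ`, and sending
`M` to its kernel is the homeomorphism. If `f ∉ M`, write `r f + i = 1` with `i ∈ M`: the bounded
function `max 0 (min (r f) 1)` has limit `1` along `M` and `0` along every maximal ideal containing
`f`, which gives injectivity and the openness of the map. A maximal ideal `N` of `S` is the image
of any maximal ideal containing the functions that vanish wherever some element of `N` is small.
-/

open Set

theorem StructSpace.isOpen_setOf_notMem {A : Type*} [CommRing A] (f : A) :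
    IsOpen {M : StructSpace A | f ∉ M.1} :=
  TopologicalSpace.GenerateOpen.basic _ ⟨f, rfl⟩

theorem Real.exists_le_nhds_of_forall_Iic_or_Ici {l : Filter ℝ} [l.NeBot] {a b : ℝ}
    (hab : Icc a b ∈ l) (h : ∀ d, Iic d ∈ l ∨ Ici d ∈ l) : ∃ c, l ≤ 𝓝 c := by
  obtain ⟨c, -, hc⟩ := isCompact_Icc.exists_clusterPt (le_principal_iff.2 hab)
  refine ⟨c, Metric.nhds_basis_closedBall.ge_iff.2 fun ε hε => ?_⟩
  rw [Real.closedBall_eq_Icc, ← Ici_inter_Iic]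
  refine inter_mem ((h _).resolve_left fun hle => ?_) ((h _).resolve_right fun hge => ?_)
  · obtain ⟨y, hy, hy'⟩ := clusterPt_iff_nonempty.1 hc (Ioi_mem_nhds (sub_lt_self c hε)) hle
    exact absurd (mem_Iic.1 hy') (not_le.2 (mem_Ioi.1 hy))
  · obtain ⟨y, hy, hy'⟩ :=
      clusterPt_iff_nonempty.1 hc (Iio_mem_nhds (lt_add_of_pos_right c hε)) hge
    exact absurd (mem_Ici.1 hy') (not_le.2 (mem_Iio.1 hy))

def distExcess (c ε : ℝ) : C(ℝ, ℝ) := ⟨fun t => max (|t - c| - ε) 0, by fun_prop⟩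

theorem distExcess_eq_zero_iff {c ε t : ℝ} : distExcess c ε t = 0 ↔ |t - c| ≤ ε := by
  simp [distExcess]

section

variable {X : Type*}

structure IsCompInvClosed (R : Subring (X → ℝ)) : Prop where
  comp_mem {f : X → ℝ} (hf : f ∈ R) (φ : C(ℝ, ℝ)) : φ ∘ f ∈ R
  inv_mem {f : X → ℝ} (hf : f ∈ R) (h : ∀ x, f x ≠ 0) : f⁻¹ ∈ R

def IsBoundedPart (S R : Subring (X → ℝ)) : Prop :=
  ∀ f, f ∈ S ↔ f ∈ R ∧ ∃ C, ∀ x, |f x| ≤ C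

theorem IsBoundedPart.le {S R : Subring (X → ℝ)} (hS : IsBoundedPart S R) : S ≤ R :=
  fun f hf => ((hS f).1 hf).1

variable {R S : Subring (X → ℝ)}

def zeroFilter (I : Ideal R) : Filter X where
  sets := {T | ∃ f ∈ I, {x | (f : X → ℝ) x = 0} ⊆ T}
  univ_sets := ⟨0, I.zero_mem, subset_univ _⟩
  sets_of_superset := fun ⟨f, hf, hfT⟩ hTT' => ⟨f, hf, hfT.trans hTT'⟩
  inter_sets := by
    rintro T T' ⟨f, hf, hfT⟩ ⟨g, hg, hgT'⟩
    refine ⟨f * f + g * g, I.add_mem (I.mul_mem_left f hf) (I.mul_mem_left g hg), fun x hx => ?_⟩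
    obtain ⟨hfx, hgx⟩ := mul_self_add_mul_self_eq_zero.1 hx
    exact ⟨hfT hfx, hgT' hgx⟩

theorem zeroSet_mem_zeroFilter {I : Ideal R} {f : R} (hf : f ∈ I) :
    {x | (f : X → ℝ) x = 0} ∈ zeroFilter I :=
  ⟨f, hf, subset_rfl⟩

def smallVanishingIdeal (N : Ideal S) : Ideal R where
  carrier := {f | ∃ s ∈ N, ∃ ε > 0, ∀ x, |(s : X → ℝ) x| ≤ ε → (f : X → ℝ) x = 0}
  zero_mem' := ⟨0, N.zero_mem, 1, one_pos, fun _ _ => rfl⟩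
  add_mem' := by
    rintro f g ⟨s, hs, ε, hε, hf⟩ ⟨t, ht, δ, hδ, hg⟩
    refine ⟨s * s + t * t, N.add_mem (N.mul_mem_left s hs) (N.mul_mem_left t ht), min ε δ ^ 2,
      by positivity, fun x hx => ?_⟩
    have key : ∀ u v : ℝ, |u * u + v * v| ≤ min ε δ ^ 2 → |u| ≤ min ε δ := fun u v huv =>
      abs_le_of_sq_le_sq (by nlinarith [le_abs_self (u * u + v * v), mul_self_nonneg v])
        (le_min hε.le hδ.le)
    have hs' := key ((s : X → ℝ) x) ((t : X → ℝ) x) hx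
    have ht' := key ((t : X → ℝ) x) ((s : X → ℝ) x) (by rw [add_comm]; exact hx)
    show (f : X → ℝ) x + (g : X → ℝ) x = 0
    rw [hf x (hs'.trans (min_le_left _ _)), hg x (ht'.trans (min_le_right _ _)), add_zero]
  smul_mem' c f := fun ⟨s, hs, ε, hε, hf⟩ => ⟨s, hs, ε, hε, fun x hx => by simp [hf x hx]⟩

theorem mem_smallVanishingIdeal {N : Ideal S} {f : R} :
    f ∈ smallVanishingIdeal N ↔ ∃ s ∈ N, ∃ ε > 0, ∀ x, |(s : X → ℝ) x| ≤ ε → (f : X → ℝ) x = 0 :=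
  Iff.rfl

end

namespace IsCompInvClosed

variable {X : Type*} {R S : Subring (X → ℝ)} {M : Ideal R}

section

theorem const_mem (hR : IsCompInvClosed R) (c : ℝ) : (fun _ => c) ∈ R :=
  hR.comp_mem R.one_mem (ContinuousMap.const ℝ c)

theorem isUnit_of_forall_ne_zero (hR : IsCompInvClosed R) {f : R}
    (hf : ∀ x, (f : X → ℝ) x ≠ 0) : IsUnit f :=
  IsUnit.of_mul_eq_one ⟨_, hR.inv_mem f.2 hf⟩
    (Subtype.ext (funext fun x => mul_inv_cancel₀ (hf x)))

theorem isUnit_of_forall_lt_abs (hR : IsCompInvClosed R) (hS : IsBoundedPart S R) {s : S}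
    {ε : ℝ} (hε : 0 < ε) (hs : ∀ x, ε < |(s : X → ℝ) x|) : IsUnit s := by
  have hs0 : ∀ x, (s : X → ℝ) x ≠ 0 := fun x h => by simpa [h] using hε.trans (hs x)
  refine IsUnit.of_mul_eq_one (⟨(s : X → ℝ)⁻¹, (hS _).2 ⟨hR.inv_mem (hS.le s.2) hs0, ε⁻¹,
    fun x => ?_⟩⟩ : S) (Subtype.ext (funext fun x => mul_inv_cancel₀ (hs0 x)))
  rw [Pi.inv_apply, abs_inv]
  exact inv_anti₀ hε (hs x).le

theorem mem_of_zeroSet_subset (hR : IsCompInvClosed R) (hM : M.IsMaximal) {f g : R}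
    (hg : g ∈ M) (hgf : ∀ x, (g : X → ℝ) x = 0 → (f : X → ℝ) x = 0) : f ∈ M := by
  by_contra hf
  obtain ⟨r, i, hi, hri⟩ := hM.exists_inv hf
  -- `g² + i²` vanishes nowhere, since `r f + i = 1` and `f` vanishes on the zero set of `g`.
  refine hM.ne_top (M.eq_top_of_isUnit_mem (M.add_mem (M.mul_mem_left g hg) (M.mul_mem_left i hi))
    (hR.isUnit_of_forall_ne_zero fun x hx => ?_))
  obtain ⟨hgx, hix⟩ := mul_self_add_mul_self_eq_zero.1 hx
  have : (r : X → ℝ) x * (f : X → ℝ) x + (i : X → ℝ) x = 1 :=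
    congrFun (congrArg Subtype.val hri) x
  rw [hgf x hgx, hix] at this
  norm_num at this

theorem zeroSet_mem_zeroFilter_iff (hR : IsCompInvClosed R) (hM : M.IsMaximal) {f : R} :
    {x | (f : X → ℝ) x = 0} ∈ zeroFilter M ↔ f ∈ M :=
  ⟨fun ⟨_, hg, hgf⟩ => hR.mem_of_zeroSet_subset hM hg hgf, zeroSet_mem_zeroFilter⟩

theorem zeroFilter_neBot (hR : IsCompInvClosed R) {I : Ideal R} (hI : I ≠ ⊤) :
    (zeroFilter I).NeBot := by
  rw [neBot_iff, Ne, ← empty_mem_iff_bot]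
  rintro ⟨f, hf, hf0⟩
  exact hI (I.eq_top_of_isUnit_mem hf (hR.isUnit_of_forall_ne_zero fun x hx => hf0 hx))

theorem setOf_le_mem_or_setOf_ge_mem_zeroFilter (hR : IsCompInvClosed R) {P : Ideal R}
    (hP : P.IsPrime) (f : R) (d : ℝ) :
    {x | (f : X → ℝ) x ≤ d} ∈ zeroFilter P ∨ {x | d ≤ (f : X → ℝ) x} ∈ zeroFilter P := by
  let p : R := ⟨_, hR.comp_mem f.2 ⟨fun t => max (t - d) 0, by fun_prop⟩⟩
  let q : R := ⟨_, hR.comp_mem f.2 ⟨fun t => max (d - t) 0, by fun_prop⟩⟩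
  have hpq : p * q ∈ P := by
    convert P.zero_mem
    ext x
    rcases le_total ((f : X → ℝ) x) d with h | h <;> simp [p, q, h]
  refine (hP.mem_or_mem hpq).imp (fun hp => ?_) (fun hq => ?_) <;>
    refine mem_of_superset (zeroSet_mem_zeroFilter ‹_›) fun x hx => ?_ <;>
    simpa [p, q, max_eq_right_iff] using hx

theorem exists_tendsto_zeroFilter (hR : IsCompInvClosed R) (hM : M.IsMaximal) {f : X → ℝ}
    (hf : f ∈ R) {C : ℝ} (hC : ∀ x, |f x| ≤ C) : ∃ c, Tendsto f (zeroFilter M) (𝓝 c) :=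
  have := hR.zeroFilter_neBot hM.ne_top
  Real.exists_le_nhds_of_forall_Iic_or_Ici (l := map f (zeroFilter M)) (a := -C) (b := C)
    (mem_map.2 (univ_mem' fun x => abs_le.1 (hC x)))
    (hR.setOf_le_mem_or_setOf_ge_mem_zeroFilter hM.isPrime ⟨f, hf⟩)

theorem tendsto_zeroFilter_iff (hR : IsCompInvClosed R) (hM : M.IsMaximal) {f : X → ℝ}
    (hf : f ∈ R) {c : ℝ} :
    Tendsto f (zeroFilter M) (𝓝 c) ↔
      ∀ ε > 0, (⟨distExcess c ε ∘ f, hR.comp_mem hf _⟩ : R) ∈ M := by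
  refine Metric.nhds_basis_closedBall.tendsto_right_iff.trans (forall₂_congr fun ε _ => ?_)
  rw [← hR.zeroSet_mem_zeroFilter_iff hM]
  simp only [Function.comp_apply, distExcess_eq_zero_iff, Metric.mem_closedBall, Real.dist_eq]
  rfl

theorem tendsto_limUnder_zeroFilter (hR : IsCompInvClosed R) (hS : IsBoundedPart S R)
    (hM : M.IsMaximal) (s : S) :
    Tendsto s (zeroFilter M) (𝓝 (limUnder (zeroFilter M) (s : X → ℝ))) :=
  have ⟨hsR, _, hC⟩ := (hS s).1 s.2
  tendsto_nhds_limUnder (hR.exists_tendsto_zeroFilter hM hsR hC)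

theorem limUnder_zeroFilter_eq (hR : IsCompInvClosed R) (hM : M.IsMaximal) {f : X → ℝ} {c : ℝ}
    (h : Tendsto f (zeroFilter M) (𝓝 c)) : limUnder (zeroFilter M) f = c :=
  have := hR.zeroFilter_neBot hM.ne_top
  h.limUnder_eq

theorem smallVanishingIdeal_ne_top (hR : IsCompInvClosed R) (hS : IsBoundedPart S R)
    {N : Ideal S} (hN : N ≠ ⊤) : smallVanishingIdeal N ≠ (⊤ : Ideal R) := by
  rw [Ne, Ideal.eq_top_iff_one, mem_smallVanishingIdeal]
  rintro ⟨s, hs, ε, hε, h⟩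
  exact hN (N.eq_top_of_isUnit_mem hs (isUnit_of_forall_lt_abs hR hS hε fun x =>
    not_le.1 fun hx => by simpa using h x hx))

noncomputable def limHom (hR : IsCompInvClosed R) (hS : IsBoundedPart S R) (hM : M.IsMaximal) :
    S →+* ℝ where
  toFun s := limUnder (zeroFilter M) (s : X → ℝ)
  map_one' := hR.limUnder_zeroFilter_eq hM tendsto_const_nhds
  map_zero' := hR.limUnder_zeroFilter_eq hM tendsto_const_nhds
  map_add' s t := hR.limUnder_zeroFilter_eq hM
    ((hR.tendsto_limUnder_zeroFilter hS hM s).add (hR.tendsto_limUnder_zeroFilter hS hM t))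
  map_mul' s t := hR.limUnder_zeroFilter_eq hM
    ((hR.tendsto_limUnder_zeroFilter hS hM s).mul (hR.tendsto_limUnder_zeroFilter hS hM t))

end

variable (hR : IsCompInvClosed R) (hS : IsBoundedPart S R)

theorem limHom_eq_iff (hM : M.IsMaximal) {s : S} {c : ℝ} :
    limHom hR hS hM s = c ↔ Tendsto s (zeroFilter M) (𝓝 c) :=
  ⟨fun h => h ▸ hR.tendsto_limUnder_zeroFilter hS hM s, hR.limUnder_zeroFilter_eq hM⟩

theorem limHom_eq_of_zeroSet_subset (hM : M.IsMaximal) {g : R} (hg : g ∈ M) {s : S} {c : ℝ}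
    (h : ∀ x, (g : X → ℝ) x = 0 → (s : X → ℝ) x = c) : limHom hR hS hM s = c :=
  (limHom_eq_iff hR hS hM).2 <| tendsto_const_nhds.congr' <|
    mem_of_superset (zeroSet_mem_zeroFilter hg) fun x hx => (h x hx).symm

theorem limHom_surjective (hM : M.IsMaximal) : Function.Surjective (limHom hR hS hM) :=
  fun c => ⟨⟨fun _ => c, (hS _).2 ⟨hR.const_mem c, |c|, fun _ => le_rfl⟩⟩,
    (limHom_eq_iff hR hS hM).2 tendsto_const_nhds⟩

theorem exists_limHom_eq_one (hM : M.IsMaximal) {f : R} (hf : f ∉ M) :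
    ∃ s : S, limHom hR hS hM s = 1 ∧
      ∀ {M' : Ideal R} (hM' : M'.IsMaximal), f ∈ M' → limHom hR hS hM' s = 0 := by
  obtain ⟨r, i, hi, hri⟩ := hM.exists_inv hf
  let φ : C(ℝ, ℝ) := ⟨fun t => max 0 (min t 1), by fun_prop⟩
  have hφ : ∀ t, |φ t| ≤ 1 := fun t =>
    abs_le.2 ⟨by simp [φ], max_le zero_le_one (min_le_right _ _)⟩
  refine ⟨⟨φ ∘ (r * f : R), (hS _).2 ⟨hR.comp_mem (r * f).2 φ, 1, fun x => hφ _⟩⟩,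
    limHom_eq_of_zeroSet_subset hR hS hM hi fun x hx => ?_,
    fun hM' hfM' => limHom_eq_of_zeroSet_subset hR hS hM' hfM' fun x hx => ?_⟩
  · have : (r : X → ℝ) x * (f : X → ℝ) x = 1 := by
      simpa [hx] using congrFun (congrArg Subtype.val hri) x
    simp [φ, this]
  · simp [φ, hx]

noncomputable def structSpaceMap (M : StructSpace R) : StructSpace S :=
  ⟨RingHom.ker (limHom hR hS M.2),
    RingHom.ker_isMaximal_of_surjective _ (limHom_surjective hR hS M.2)⟩

theorem mem_structSpaceMap {M : StructSpace R} {s : S} :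
    s ∈ (structSpaceMap hR hS M).1 ↔ limHom hR hS M.2 s = 0 :=
  RingHom.mem_ker

theorem structSpaceMap_injective : Function.Injective (structSpaceMap hR hS) := by
  intro M M' h
  by_contra hne
  obtain ⟨f, hfM, hfM'⟩ := not_subset.1 fun hle : M.1 ≤ M'.1 =>
    hne (Subtype.ext (M.2.eq_of_le M'.2.ne_top hle))
  obtain ⟨s, hs1, hs0⟩ := exists_limHom_eq_one hR hS M'.2 hfM'
  have hsM : s ∈ (structSpaceMap hR hS M).1 := (mem_structSpaceMap hR hS).2 (hs0 M.2 hfM)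
  rw [h, mem_structSpaceMap, hs1] at hsM
  exact one_ne_zero hsM

theorem structSpaceMap_surjective : Function.Surjective (structSpaceMap hR hS) := by
  intro N
  obtain ⟨M, hM, hJM⟩ := Ideal.exists_le_maximal _ (smallVanishingIdeal_ne_top hR hS N.2.ne_top)
  refine ⟨⟨M, hM⟩, Subtype.ext (N.2.eq_of_le (structSpaceMap hR hS ⟨M, hM⟩).2.ne_top
    fun s hs => ?_).symm⟩
  refine (mem_structSpaceMap hR hS).2 ((limHom_eq_iff hR hS hM).2
    ((hR.tendsto_zeroFilter_iff hM (hS.le s.2)).2 fun ε hε =>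
      hJM (mem_smallVanishingIdeal.2 ⟨s, hs, ε, hε, fun x hx => ?_⟩)))
  simpa [distExcess_eq_zero_iff] using hx

theorem continuous_structSpaceMap : Continuous (structSpaceMap hR hS) := by
  refine continuous_generateFrom_iff.2 ?_
  rintro _ ⟨s, rfl⟩
  have : structSpaceMap hR hS ⁻¹' {N | s ∉ N.1} = ⋃ ε > 0,
      {M : StructSpace R | (⟨distExcess 0 ε ∘ s, hR.comp_mem (hS.le s.2) _⟩ : R) ∉ M.1} := by
    ext M
    simp [mem_structSpaceMap, limHom_eq_iff, hR.tendsto_zeroFilter_iff M.2 (hS.le s.2)]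
  rw [this]
  exact isOpen_biUnion fun ε _ => StructSpace.isOpen_setOf_notMem _

noncomputable def structSpaceEquiv : StructSpace R ≃ StructSpace S :=
  Equiv.ofBijective _ ⟨structSpaceMap_injective hR hS, structSpaceMap_surjective hR hS⟩

theorem continuous_structSpaceEquiv_symm : Continuous (structSpaceEquiv hR hS).symm := by
  refine continuous_generateFrom_iff.2 ?_
  rintro _ ⟨f, rfl⟩
  refine isOpen_iff_forall_mem_open.2 fun N (hN : f ∉ ((structSpaceEquiv hR hS).symm N).1) => ?_
  obtain ⟨s, hs1, hs0⟩ := exists_limHom_eq_one hR hS _ hN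
  have hmem : ∀ N', s ∈ N'.1 ↔ limHom hR hS ((structSpaceEquiv hR hS).symm N').2 s = 0 :=
    fun N' => by
      conv_lhs => rw [← (structSpaceEquiv hR hS).apply_symm_apply N']
      exact mem_structSpaceMap hR hS
  refine ⟨{N' | s ∉ N'.1}, fun N' hN' hfN' => hN' ((hmem N').2 (hs0 _ hfN')),
    StructSpace.isOpen_setOf_notMem s, fun h => ?_⟩
  rw [hmem, hs1] at h
  exact one_ne_zero h

noncomputable def structSpaceHomeomorph : StructSpace R ≃ₜ StructSpace S where
  toEquiv := structSpaceEquiv hR hS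
  continuous_toFun := continuous_structSpaceMap hR hS
  continuous_invFun := continuous_structSpaceEquiv_symm hR hS

end IsCompInvClosed

section BaireOne

variable {X : Type*} [TopologicalSpace X]

theorem comp_mem_baireOne {f : X → ℝ} (hf : f ∈ baireOne X) (φ : C(ℝ, ℝ)) :
    φ ∘ f ∈ baireOne X :=
  have ⟨F, hF⟩ := hf
  ⟨fun n => φ.comp (F n), fun x => (φ.continuous.tendsto _).comp (hF x)⟩

theorem inv_mem_baireOne {f : X → ℝ} (hf : f ∈ baireOne X) (h : ∀ x, f x ≠ 0) :
    f⁻¹ ∈ baireOne X := by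
  obtain ⟨F, hF⟩ := hf
  refine ⟨fun n => ⟨fun x => F n x / (F n x ^ 2 + 1 / (n + 1)), (F n).continuous.div
    (((F n).continuous.pow 2).add continuous_const) fun x =>
      (add_pos_of_nonneg_of_pos (sq_nonneg _) Nat.one_div_pos_of_nat).ne'⟩, fun x => ?_⟩
  have hlim := (hF x).div (((hF x).pow 2).add tendsto_one_div_add_atTop_nhds_zero_nat)
    (by simpa using h x)
  rwa [add_zero, pow_two, div_mul_cancel_left₀ (h x)] at hlim

theorem isCompInvClosed_baireOne : IsCompInvClosed (baireOne X) :=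
  ⟨comp_mem_baireOne, inv_mem_baireOne⟩

end BaireOne

theorem structSpace_baireOne_homeomorph_structSpace_baireOneStar_general
    (X : Type*) [TopologicalSpace X] :
    Nonempty (StructSpace ↥(baireOne X) ≃ₜ StructSpace ↥(baireOneStar X)) :=
  ⟨isCompInvClosed_baireOne.structSpaceHomeomorph fun _ => Iff.rfl⟩

/-- For a `T₄` space `X`, the structure space of `B₁(X)` is homeomorphic to the
structure space of `B₁*(X)`. -/
theorem structSpace_baireOne_homeomorph_structSpace_baireOneStar
    (X : Type*) [TopologicalSpace X] [T4Space X] :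
    Nonempty (StructSpace ↥(baireOne X) ≃ₜ StructSpace ↥(baireOneStar X)) :=
  structSpace_baireOne_homeomorph_structSpace_baireOneStar_general X
end

section
/- Let (X, τ) be a T_4 space (normal and Hausdorff) and let σ be the topology on X having {Z(f) : f ∈ B_1(X, τ)} as a base for its closed sets. Then (X, σ) is compact if and only if every maximal ideal of B_1(X, τ) is fixed. -/
open Filter Topology

/-- The topology `σ` on `X` having the zero sets of Baire one functions as a base for
its closed sets. -/
def sigmaTop (X : Type*) [TopologicalSpace X] : TopologicalSpace X :=
  TopologicalSpace.generateFrom {U : Set X | ∃ f ∈ baireOne X, U = {x | f x ≠ 0}}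

/-!
A nowhere-vanishing Baire one function is invertible in `B₁`, so in a proper ideal every finite
family `f₁, …, fₙ` has a common zero (a zero of `∑ fᵢ²`). The zero sets of an ideal's members
are `σ`-closed, so compactness of `σ` makes every proper ideal fixed. Conversely, an
ultrafilter `F` gives the proper ideal of functions whose zero set lies in `F`; a common zero
of a maximal ideal containing it is a `σ`-limit of `F`.
-/

namespace baireOne

variable {X : Type*} [TopologicalSpace X]

lemma inv_mem_of_pos {h : X → ℝ} (hh : h ∈ baireOne X) (hpos : ∀ x, 0 < h x) :
    (fun x => (h x)⁻¹) ∈ baireOne X := by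
  obtain ⟨H, hH⟩ := hh
  -- truncating below at `1 / (n + 1)` keeps the approximants away from `0`
  have hpos_n (n : ℕ) : (0 : ℝ) < 1 / (n + 1) := by positivity
  refine ⟨fun n => ⟨fun x => (max (H n x) (1 / (n + 1)))⁻¹,
    ((H n).continuous.max continuous_const).inv₀ fun x => (lt_max_of_lt_right (hpos_n n)).ne'⟩,
    fun x => ?_⟩
  have hmax : Tendsto (fun n : ℕ => max (H n x) (1 / (n + 1 : ℝ))) atTop (𝓝 (h x)) := by
    simpa [max_eq_left (hpos x).le] using (hH x).max tendsto_one_div_add_atTop_nhds_zero_nat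
  exact hmax.inv₀ (hpos x).ne'

lemma isUnit_of_forall_ne_zero {f : baireOne X} (hf : ∀ x, (f : X → ℝ) x ≠ 0) : IsUnit f := by
  have hinv : (fun x => ((f : X → ℝ) x * (f : X → ℝ) x)⁻¹) ∈ baireOne X :=
    inv_mem_of_pos (mul_mem f.2 f.2) fun x => mul_self_pos.2 (hf x)
  refine IsUnit.of_mul_eq_one (a := f) ⟨_, mul_mem f.2 hinv⟩ (Subtype.ext (funext fun x => ?_))
  have hx := hf x
  change (f : X → ℝ) x * ((f : X → ℝ) x * ((f : X → ℝ) x * (f : X → ℝ) x)⁻¹) = 1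
  field_simp

def zeroSet (f : baireOne X) : Set X := {x | (f : X → ℝ) x = 0}

lemma isClosed_zeroSet (f : baireOne X) : IsClosed[sigmaTop X] (zeroSet f) := by
  have hopen : IsOpen[sigmaTop X] {x | (f : X → ℝ) x ≠ 0} :=
    TopologicalSpace.isOpen_generateFrom_of_mem ⟨f, f.2, rfl⟩
  rw [← @isOpen_compl_iff X _ (sigmaTop X), zeroSet, Set.compl_ofPred]
  exact hopen

lemma exists_common_zero_of_ne_top {I : Ideal (baireOne X)} (hI : I ≠ ⊤) {ι : Type*}
    (s : Finset ι) (f : ι → baireOne X) (hf : ∀ i ∈ s, f i ∈ I) :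
    ∃ x, ∀ i ∈ s, (f i : X → ℝ) x = 0 := by
  set g := ∑ i ∈ s, f i * f i
  have hgI : g ∈ I := I.sum_mem fun i hi => I.mul_mem_left _ (hf i hi)
  obtain ⟨x, hx⟩ : ∃ x, (g : X → ℝ) x = 0 := by
    by_contra! hne
    exact hI (I.eq_top_of_isUnit_mem hgI (isUnit_of_forall_ne_zero hne))
  have hgx : (g : X → ℝ) x = ∑ i ∈ s, (f i : X → ℝ) x * (f i : X → ℝ) x := by
    simp [g, Finset.sum_apply]
  rw [hgx, Finset.sum_eq_zero_iff_of_nonneg fun i _ => mul_self_nonneg _] at hx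
  exact ⟨x, fun i hi => mul_self_eq_zero.1 (hx i hi)⟩

def zeroSetIdeal (F : Filter X) : Ideal (baireOne X) where
  carrier := {f | zeroSet f ∈ F}
  zero_mem' := univ_mem' fun _ => rfl
  add_mem' {f g} hf hg := mem_of_superset (inter_mem hf hg) fun x ⟨hfx, hgx⟩ => by
    change (f : X → ℝ) x + (g : X → ℝ) x = 0
    rw [hfx, hgx, add_zero]
  smul_mem' c f hf := mem_of_superset hf fun x hfx => by
    change (c : X → ℝ) x * (f : X → ℝ) x = 0
    rw [hfx, mul_zero]

lemma mem_zeroSetIdeal {F : Filter X} {f : baireOne X} : f ∈ zeroSetIdeal F ↔ zeroSet f ∈ F :=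
  Iff.rfl

lemma zeroSetIdeal_ne_top (F : Filter X) [F.NeBot] : zeroSetIdeal F ≠ ⊤ := by
  rw [Ne, Ideal.eq_top_iff_one, mem_zeroSetIdeal]
  convert F.empty_notMem
  exact Set.eq_empty_of_forall_notMem fun x (hx : (1 : X → ℝ) x = 0) => one_ne_zero hx

lemma nonempty_biInter_zeroSet_of_compactSpace (hcompact : @CompactSpace X (sigmaTop X))
    {I : Ideal (baireOne X)} (hI : I ≠ ⊤) : (⋂ f ∈ (I : Set (baireOne X)), zeroSet f).Nonempty := by
  rw [Set.biInter_eq_iInter, ← Set.univ_inter (⋂ _, _)]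
  refine @IsCompact.inter_iInter_nonempty X (sigmaTop X) _ _
    (@isCompact_univ X (sigmaTop X) hcompact) _ (fun f => isClosed_zeroSet f.1) fun s => ?_
  obtain ⟨x, hx⟩ := exists_common_zero_of_ne_top hI s Subtype.val fun f _ => f.2
  exact ⟨x, trivial, Set.mem_iInter₂.2 hx⟩

/-- A basic `σ`-neighbourhood `{g ≠ 0}` of `x` missing from the ultrafilter `F` would put `Z(g)`
in `F`, hence `g` in `M`, contradicting `g x ≠ 0`. -/
lemma compactSpace_of_forall_isMaximal_nonempty
    (h : ∀ M : Ideal (baireOne X), M.IsMaximal →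
      (⋂ f ∈ (M : Set (baireOne X)), zeroSet f).Nonempty) :
    @CompactSpace X (sigmaTop X) := by
  refine @isCompact_univ_iff X (sigmaTop X) |>.1 <|
    @isCompact_iff_ultrafilter_le_nhds' X (sigmaTop X) _ |>.2 fun F _ => ?_
  obtain ⟨M, hM, hFM⟩ := Ideal.exists_le_maximal _ (zeroSetIdeal_ne_top (F : Filter X))
  obtain ⟨x, hx⟩ := h M hM
  refine ⟨x, trivial, TopologicalSpace.tendsto_nhds_generateFrom_iff.2 ?_⟩
  rintro _ ⟨g, hg, rfl⟩ hgx
  by_contra hnot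
  have hZg : zeroSet ⟨g, hg⟩ ∈ F := by
    simpa only [zeroSet, Set.preimage_id', Set.compl_ofPred, not_not] using
      Ultrafilter.compl_mem_iff_notMem.2 hnot
  have hgM : ⟨g, hg⟩ ∈ M := hFM (mem_zeroSetIdeal.2 hZg)
  exact hgx (Set.mem_iInter₂.1 hx _ hgM)

end baireOne

theorem sigma_compact_iff_all_maximal_fixed_general
    (X : Type*) [TopologicalSpace X] :
    @CompactSpace X (sigmaTop X) ↔
      ∀ M : Ideal ↥(baireOne X), M.IsMaximal →
        (⋂ f ∈ (M : Set ↥(baireOne X)), {x : X | (f : X → ℝ) x = 0}).Nonempty :=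
  ⟨fun hcompact _ hM => baireOne.nonempty_biInter_zeroSet_of_compactSpace hcompact hM.ne_top,
    baireOne.compactSpace_of_forall_isMaximal_nonempty⟩

/-- For a `T₄` space `(X, τ)`, the space `(X, σ)` is compact iff every maximal ideal of
`B₁(X, τ)` is fixed. -/
theorem sigma_compact_iff_all_maximal_fixed
    (X : Type*) [TopologicalSpace X] [T4Space X] :
    @CompactSpace X (sigmaTop X) ↔
      ∀ M : Ideal ↥(baireOne X), M.IsMaximal →
        (⋂ f ∈ (M : Set ↥(baireOne X)), {x : X | (f : X → ℝ) x = 0}).Nonempty :=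
  sigma_compact_iff_all_maximal_fixed_general X
end

section
/- Let (X, τ) be a perfectly normal T_1 space and let σ be the topology on X having {Z(f) : f ∈ B_1(X, τ)} as a base for its closed sets. Then σ is the discrete topology on X. -/
open Filter Topology

/-!
The indicator of the zero set of a continuous `g` is the pointwise limit of the continuous
functions `max 0 (1 - n |g|)`. In a perfectly normal space every closed set is such a zero set,
so its indicator is Baire one and the closed set, being the nonzero set of that indicator, is
`σ`-open. In a `T₁` space this makes every singleton `σ`-open.
-/

section

variable {X : Type*} [TopologicalSpace X]

theorem tendsto_max_zero_one_sub_mul_abs (a : ℝ) :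
    Tendsto (fun n : ℕ => max 0 (1 - n * |a|)) atTop
      (𝓝 (({0} : Set ℝ).indicator 1 a)) := by
  rcases eq_or_ne a 0 with rfl | ha
  · simp
  · have hlarge : ∀ᶠ n : ℕ in atTop, 1 ≤ n * |a| :=
      (tendsto_natCast_atTop_atTop.atTop_mul_const (abs_pos.2 ha)).eventually_ge_atTop 1
    rw [Set.indicator_of_notMem (by simpa using ha)]
    refine tendsto_const_nhds.congr' ?_
    filter_upwards [hlarge] with n hn
    exact (max_eq_left (by linarith)).symm

theorem indicator_preimage_zero_mem_baireOne (g : C(X, ℝ)) :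
    (g ⁻¹' {0}).indicator 1 ∈ baireOne X :=
  ⟨fun n => ⟨fun x => max 0 (1 - n * |g x|), by fun_prop⟩,
    fun x => by simpa [Set.indicator] using tendsto_max_zero_one_sub_mul_abs (g x)⟩

theorem isOpen_sigmaTop_setOf_ne_zero {f : X → ℝ} (hf : f ∈ baireOne X) :
    IsOpen[sigmaTop X] {x | f x ≠ 0} :=
  TopologicalSpace.GenerateOpen.basic _ ⟨f, hf, rfl⟩

theorem IsClosed.isOpen_sigmaTop [PerfectlyNormalSpace X] {s : Set X} (hs : IsClosed s) :
    IsOpen[sigmaTop X] s := by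
  obtain ⟨g, rfl, -⟩ := perfectlyNormalSpace_iff_forall_isClosed_preimage_zero.1 ‹_› s hs
  convert isOpen_sigmaTop_setOf_ne_zero (indicator_preimage_zero_mem_baireOne g)
  ext x
  by_cases hx : g x = 0 <;> simp [hx]

end

/-- For a perfectly normal `T₁` space `(X, τ)`, the topology `σ` generated by the zero
sets of Baire one functions as a base for closed sets is the discrete topology. -/
theorem sigmaTop_discrete_of_perfectlyNormal
    (X : Type*) [TopologicalSpace X] [T1Space X] [PerfectlyNormalSpace X] :
    sigmaTop X = ⊥ :=
  eq_bot_of_singletons_open fun _ => isClosed_singleton.isOpen_sigmaTop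
end
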